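/- arXiv:1104.5033 — 4 statements merged into one kernel-verified Lean document; each statement's English description precedes it below -/
import Mathlib

section
/- There is a universal constant C > 0 with the following property. Let d ≥ 1, let L ≥ 2 be an integer, let β > 1, and let σ, σ₀ : T_L → [−1,1] be measurable functions such that ‖σ − σ₀‖_∞ ≤ h for some h > 0 satisfying 2h ≤ 1 − m_β. Then |F(σ) − F(σ₀)| ≤ C · L^d · h · |log h|. -/
open MeasureTheory Real

/-- The `d`-dimensional torus `(ℝ/Lℤ)^d` with its Lebesgue (Haar) measure. -/
abbrev Torus (d L : ℕ) := Fin d → AddCircle (L : ℝ)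

/-- Geodesic (Euclidean) distance on the torus. -/
noncomputable def torusDist {d L : ℕ} (x y : Torus d L) : ℝ :=
  Real.sqrt (∑ i, (dist (x i) (y i)) ^ 2)

/-- The entropy function `i`. (`Real.log 0 = 0` gives the convention `0 · log 0 = 0`.) -/
noncomputable def ient (m : ℝ) : ℝ :=
  (1 - m) / 2 * Real.log ((1 - m) / 2) + (1 + m) / 2 * Real.log ((1 + m) / 2)

/-- The hypotheses on the Kac interaction potential `J : [0,∞) → ℝ`: nonnegative, bounded,
continuous, supported in `[0,1]`, smooth and strictly decreasing on `[0,1]`, and normalized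
so that `∫_{ℝ^d} J(|r|) dr = 1`. -/
structure KacPotential (d : ℕ) (J : ℝ → ℝ) : Prop where
  nonneg : ∀ r, 0 ≤ J r
  bounded : ∃ M, ∀ r, |J r| ≤ M
  continuous : Continuous J
  support : ∀ r, 1 < r → J r = 0
  strictAnti : StrictAntiOn J (Set.Icc 0 1)
  smooth : ContDiffOn ℝ (⊤ : ℕ∞) J (Set.Icc 0 1)
  normalized : (∫ r : EuclideanSpace ℝ (Fin d), J ‖r‖) = 1

/-- The Gates–Penrose–Lebowitz free energy functional
`F(σ) = (1/β)∫ i(σ(x)) dx − (1/2)∫∫ J(|x−y|) σ(x) σ(y) dx dy`. -/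
noncomputable def GPL (d L : ℕ) [Fact ((0:ℝ) < L)] (β : ℝ) (J : ℝ → ℝ)
    (σ : Torus d L → ℝ) : ℝ :=
  (1 / β) * (∫ x, ient (σ x))
    - (1 / 2) * ∫ x, ∫ y, J (torusDist x y) * σ x * σ y

section Aux

open Set Filter

private lemma mul_one_sub_log_mono {a b : ℝ} (ha : 0 < a) (hab : a ≤ b) (hb : b ≤ 1) :
    a * (1 - Real.log a) ≤ b * (1 - Real.log b) := by
  have hb0 : 0 < b := lt_of_lt_of_le ha hab
  have hlogb : Real.log b ≤ 0 := Real.log_nonpos hb0.le hb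
  have hdiv : Real.log (b / a) ≤ b / a - 1 := Real.log_le_sub_one_of_pos (div_pos hb0 ha)
  have hld : Real.log (b / a) = Real.log b - Real.log a := Real.log_div hb0.ne' ha.ne'
  have h1 : a * (Real.log b - Real.log a) ≤ b - a := by
    rw [← hld]
    have := mul_le_mul_of_nonneg_left hdiv ha.le
    calc a * Real.log (b/a) ≤ a * (b/a - 1) := this
      _ = b - a := by field_simp
  nlinarith [mul_nonneg (sub_nonneg.2 hab) (neg_nonneg.2 hlogb)]

private lemma mul_log_diff_bound {s t δ : ℝ} (hs : 0 ≤ s) (hst : s ≤ t) (ht : t ≤ 1)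
    (hu : t - s ≤ δ) (hδ0 : 0 < δ) (hδ1 : δ ≤ 1) :
    |t * Real.log t - s * Real.log s| ≤ δ * (1 - Real.log δ) := by
  have hδpos : 0 < δ * (1 - Real.log δ) := by
    have : Real.log δ ≤ 0 := Real.log_nonpos hδ0.le hδ1
    nlinarith
  rcases eq_or_lt_of_le hst with rfl | hlt
  · simpa using hδpos.le
  have ht0 : 0 < t := lt_of_le_of_lt hs hlt
  set u := t - s with hu'
  have hu0 : 0 < u := by simp [hu']; linarith
  have hu1 : u ≤ 1 := by linarith
  have hut : u ≤ t := by simp [hu']; linarith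
  have hlogt : Real.log t ≤ 0 := Real.log_nonpos ht0.le ht
  have hB : 0 ≤ s * (Real.log t - Real.log s) ∧ s * (Real.log t - Real.log s) ≤ u := by
    rcases eq_or_lt_of_le hs with rfl | hs0
    · simp [hu0.le]
    · constructor
      · exact mul_nonneg hs0.le (sub_nonneg.2 (Real.log_le_log hs0 hst))
      · have hdiv : Real.log (t / s) ≤ t / s - 1 := Real.log_le_sub_one_of_pos (div_pos ht0 hs0)
        have hld : Real.log (t / s) = Real.log t - Real.log s := Real.log_div ht0.ne' hs0.ne'
        have := mul_le_mul_of_nonneg_left hdiv hs0.le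
        rw [hld] at this
        calc s * (Real.log t - Real.log s) ≤ s * (t/s - 1) := this
          _ = u := by field_simp; rw [hu']
  have hkey : t * Real.log t - s * Real.log s = u * Real.log t + s * (Real.log t - Real.log s) := by
    ring
  have hup : t * Real.log t - s * Real.log s ≤ u := by
    rw [hkey]
    nlinarith [mul_nonpos_of_nonneg_of_nonpos hu0.le hlogt]
  have hlow : u * Real.log u ≤ t * Real.log t - s * Real.log s := by
    rw [hkey]
    have := Real.log_le_log hu0 hut
    nlinarith
  have hmono : u * (1 - Real.log u) ≤ δ * (1 - Real.log δ) :=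
    mul_one_sub_log_mono hu0 hu hδ1
  have hlogu : Real.log u ≤ 0 := Real.log_nonpos hu0.le hu1
  rw [abs_le]
  constructor <;> nlinarith

private lemma mul_log_diff_bound' {s t δ : ℝ} (hs : s ∈ Set.Icc (0:ℝ) 1)
    (ht : t ∈ Set.Icc (0:ℝ) 1) (hst : |s - t| ≤ δ) (hδ0 : 0 < δ) (hδ1 : δ ≤ 1) :
    |s * Real.log s - t * Real.log t| ≤ δ * (1 - Real.log δ) := by
  rcases le_total s t with hc | hc
  · rw [abs_sub_comm]
    exact mul_log_diff_bound hs.1 hc ht.2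
      (by rw [abs_sub_comm, abs_of_nonneg (by linarith)] at hst; linarith) hδ0 hδ1
  · exact mul_log_diff_bound ht.1 hc hs.2
      (by rw [abs_of_nonneg (by linarith)] at hst; linarith) hδ0 hδ1

private lemma ient_diff_bound {a b h : ℝ} (ha : a ∈ Set.Icc (-1:ℝ) 1) (hb : b ∈ Set.Icc (-1:ℝ) 1)
    (hab : |a - b| ≤ h) (h0 : 0 < h) (h12 : h ≤ 1/2) :
    |ient a - ient b| ≤ 4 * h * |Real.log h| := by
  obtain ⟨ha1, ha2⟩ := ha; obtain ⟨hb1, hb2⟩ := hb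
  have hδ0 : 0 < h / 2 := by linarith
  have hδ1 : h / 2 ≤ 1 := by linarith
  have h1 : |(1 - a)/2 * Real.log ((1 - a)/2) - (1 - b)/2 * Real.log ((1 - b)/2)|
      ≤ h/2 * (1 - Real.log (h/2)) := by
    apply mul_log_diff_bound' (by constructor <;> [linarith; linarith])
      (by constructor <;> [linarith; linarith]) ?_ hδ0 hδ1
    have heq : (1 - a)/2 - (1 - b)/2 = -((a - b)/2) := by ring
    rw [heq, abs_neg, abs_div, abs_of_pos (by norm_num : (0:ℝ) < 2)]
    linarith [hab]
  have h2 : |(1 + a)/2 * Real.log ((1 + a)/2) - (1 + b)/2 * Real.log ((1 + b)/2)|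
      ≤ h/2 * (1 - Real.log (h/2)) := by
    apply mul_log_diff_bound' (by constructor <;> [linarith; linarith])
      (by constructor <;> [linarith; linarith]) ?_ hδ0 hδ1
    have heq : (1 + a)/2 - (1 + b)/2 = (a - b)/2 := by ring
    rw [heq, abs_div, abs_of_pos (by norm_num : (0:ℝ) < 2)]
    linarith [hab]
  have htri : |ient a - ient b| ≤ 2 * (h/2 * (1 - Real.log (h/2))) := by
    unfold ient
    calc |(1 - a) / 2 * Real.log ((1 - a) / 2) + (1 + a) / 2 * Real.log ((1 + a) / 2)
        - ((1 - b) / 2 * Real.log ((1 - b) / 2) + (1 + b) / 2 * Real.log ((1 + b) / 2))|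
        ≤ |(1 - a)/2 * Real.log ((1 - a)/2) - (1 - b)/2 * Real.log ((1 - b)/2)|
          + |(1 + a)/2 * Real.log ((1 + a)/2) - (1 + b)/2 * Real.log ((1 + b)/2)| := by
          rw [show (1 - a) / 2 * Real.log ((1 - a) / 2) + (1 + a) / 2 * Real.log ((1 + a) / 2)
            - ((1 - b) / 2 * Real.log ((1 - b) / 2) + (1 + b) / 2 * Real.log ((1 + b) / 2))
            = ((1 - a)/2 * Real.log ((1 - a)/2) - (1 - b)/2 * Real.log ((1 - b)/2))
              + ((1 + a)/2 * Real.log ((1 + a)/2) - (1 + b)/2 * Real.log ((1 + b)/2)) by ring]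
          exact abs_add_le _ _
      _ ≤ 2 * (h/2 * (1 - Real.log (h/2))) := by linarith
  have hlh : Real.log h < 0 := Real.log_neg h0 (by linarith)
  have habs : |Real.log h| = -Real.log h := abs_of_neg hlh
  have hlog2 : Real.log (h/2) = Real.log h - Real.log 2 := Real.log_div h0.ne' two_ne_zero
  have hl2 : (0.6931471803 : ℝ) < Real.log 2 := Real.log_two_gt_d9
  have hl2' : Real.log 2 < 0.6931471808 := Real.log_two_lt_d9
  have hlogh : Real.log h ≤ -Real.log 2 := by
    calc Real.log h ≤ Real.log (1/2) := Real.log_le_log h0 (by linarith)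
      _ = -Real.log 2 := by rw [one_div, Real.log_inv]
  rw [habs]
  calc |ient a - ient b| ≤ 2 * (h/2 * (1 - Real.log (h/2))) := htri
    _ = h * (1 + Real.log 2 - Real.log h) := by rw [hlog2]; ring
    _ ≤ 4 * h * (-Real.log h) := by nlinarith

private lemma mul_log_bounds {x : ℝ} (hx0 : 0 ≤ x) (hx1 : x ≤ 1) :
    -1 ≤ x * Real.log x ∧ x * Real.log x ≤ 0 := by
  rcases eq_or_lt_of_le hx0 with rfl | hx
  · simp
  constructor
  · have h1 := Real.log_le_sub_one_of_pos (inv_pos.2 hx)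
    rw [Real.log_inv] at h1
    have h2 := mul_le_mul_of_nonneg_left h1 hx0
    have h3 : x * x⁻¹ = 1 := mul_inv_cancel₀ hx.ne'
    nlinarith
  · exact mul_nonpos_of_nonneg_of_nonpos hx0 (Real.log_nonpos hx0 hx1)

private lemma ient_abs_le {m : ℝ} (hm : m ∈ Set.Icc (-1:ℝ) 1) : |ient m| ≤ 2 := by
  obtain ⟨h1, h2⟩ := hm
  have b1 := mul_log_bounds (x := (1 - m)/2) (by linarith) (by linarith)
  have b2 := mul_log_bounds (x := (1 + m)/2) (by linarith) (by linarith)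
  rw [abs_le]; unfold ient; constructor <;> nlinarith [b1.1, b1.2, b2.1, b2.2]

private lemma continuous_ient : Continuous ient := by
  unfold ient
  exact (Real.continuous_mul_log.comp ((continuous_const.sub continuous_id).div_const 2)).add
    (Real.continuous_mul_log.comp ((continuous_const.add continuous_id).div_const 2))

private lemma pi_restrict_eq (d : ℕ) (S : Set ℝ) (hS : MeasurableSet S) :
    (Measure.pi fun _ : Fin d => (volume : Measure ℝ).restrict S) =
      (volume : Measure (Fin d → ℝ)).restrict (Set.pi Set.univ fun _ => S) := by
  refine Measure.pi_eq (μ := fun _ : Fin d => (volume : Measure ℝ).restrict S)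
    fun s hs => ?_
  rw [Measure.restrict_apply (MeasurableSet.univ_pi hs), ← Set.pi_inter_distrib, volume_pi_pi]
  exact Finset.prod_congr rfl fun i _ => (Measure.restrict_apply (hs i)).symm

private lemma addCircle_norm_coe {L : ℝ} [hL : Fact (0 < L)] {t : ℝ}
    (ht : t ∈ Set.Ioc (-(L/2)) (L/2)) : ‖(t : AddCircle L)‖ = |t| := by
  have hL0 := hL.out
  rw [AddCircle.norm_eq]
  rcases eq_or_lt_of_le ht.2 with h | h
  · have h2 : L⁻¹ * t = 1/2 := by rw [h]; field_simp
    have h3 : round (L⁻¹ * t) = 1 := by rw [h2, round_eq]; norm_num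
    rw [h3, h, abs_of_nonpos (by push_cast; linarith), abs_of_nonneg (by linarith)]
    push_cast; ring
  · have h3 : round (L⁻¹ * t) = 0 := by
      rw [round_eq_zero_iff]
      constructor
      · have h6 : L⁻¹ * (-(L/2)) = -(1/2) := by field_simp
        have h7 := mul_lt_mul_of_pos_left ht.1 (inv_pos.2 hL0)
        rw [h6] at h7
        exact h7.le
      · have h5 : L⁻¹ * t < L⁻¹ * (L/2) := mul_lt_mul_of_pos_left h (inv_pos.2 hL0)
        have h4 : L⁻¹ * (L/2) = 1/2 := by field_simp
        simpa [h4] using h5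
    simp [h3]

private lemma continuous_torusDist_right {d L : ℕ} (x : Torus d L) :
    Continuous fun y => torusDist x y := by
  unfold torusDist
  exact Real.continuous_sqrt.comp <| continuous_finset_sum _ fun i _ =>
    ((continuous_const.dist (continuous_apply i)).pow 2)

private lemma continuous_torusDist_pair {d L : ℕ} :
    Continuous fun p : Torus d L × Torus d L => torusDist p.1 p.2 := by
  unfold torusDist
  exact Real.continuous_sqrt.comp <| continuous_finset_sum _ fun i _ =>
    (((continuous_apply i).comp continuous_fst).dist
      ((continuous_apply i).comp continuous_snd)).pow 2

private lemma euclid_integrable {d : ℕ} {J : ℝ → ℝ} (hJ : KacPotential d J) :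
    Integrable (fun y : Fin d → ℝ => J (Real.sqrt (∑ i, (y i) ^ 2))) := by
  have hcont : Continuous fun y : Fin d → ℝ => J (Real.sqrt (∑ i, (y i) ^ 2)) :=
    hJ.continuous.comp <| Real.continuous_sqrt.comp <|
      continuous_finset_sum _ fun i _ => (continuous_apply i).pow 2
  apply hcont.integrable_of_hasCompactSupport
  apply HasCompactSupport.intro (isCompact_closedBall (0 : Fin d → ℝ) 1)
  intro y hy
  apply hJ.support
  by_contra hle
  push_neg at hle
  apply hy
  rw [Metric.mem_closedBall, dist_zero_right]
  apply pi_norm_le_iff_of_nonneg zero_le_one |>.2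
  intro i
  rw [Real.norm_eq_abs, ← Real.sqrt_sq_eq_abs]
  calc Real.sqrt ((y i)^2) ≤ Real.sqrt (∑ j, (y j)^2) :=
        Real.sqrt_le_sqrt (Finset.single_le_sum (fun j _ => sq_nonneg (y j)) (Finset.mem_univ i))
    _ ≤ 1 := hle

private lemma kernel_le_one {d L : ℕ} [hLf : Fact ((0:ℝ) < L)] {J : ℝ → ℝ}
    (hJ : KacPotential d J) (x : Torus d L) : (∫ y, J (torusDist x y)) ≤ 1 := by
  have hL : (0:ℝ) < L := hLf.out
  have htrans : (∫ y, J (torusDist x y)) = ∫ y : Torus d L, J (torusDist 0 y) := by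
    conv_rhs => rw [← integral_add_left_eq_self (μ := (volume : Measure (Torus d L)))
      (fun y : Torus d L => J (torusDist 0 y)) (-x)]
    congr 1
    ext y
    congr 1
    unfold torusDist
    congr 1
    refine Finset.sum_congr rfl fun i _ => ?_
    congr 1
    show dist (x i) (y i) = dist ((0 : AddCircle (L:ℝ))) ((-x + y) i)
    rw [dist_zero_left, dist_eq_norm]
    have hrw : (-x + y) i = -(x i - y i) := by simp [Pi.add_apply]; abel
    rw [hrw, norm_neg]
  rw [htrans]
  set S : Set ℝ := Set.Ioc (-((L:ℝ)/2)) (-((L:ℝ)/2) + L) with hSdef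
  have hmeasS : MeasurableSet S := measurableSet_Ioc
  have hΦmp : MeasurePreserving (fun (y : Fin d → ℝ) (i : Fin d) => ((y i : ℝ) : AddCircle (L:ℝ)))
      (Measure.pi fun _ : Fin d => (volume : Measure ℝ).restrict S)
      (volume : Measure (Torus d L)) := by
    rw [volume_pi]
    exact measurePreserving_pi _ _ fun i => AddCircle.measurePreserving_mk (L:ℝ) (-((L:ℝ)/2))
  have hgc : Continuous fun y : Torus d L => J (torusDist 0 y) :=
    hJ.continuous.comp (continuous_torusDist_right 0)
  have hmap : (∫ y : Torus d L, J (torusDist 0 y)) =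
      ∫ y : Fin d → ℝ in Set.pi Set.univ fun _ => S,
        J (torusDist 0 (fun i => ((y i : ℝ) : AddCircle (L:ℝ)))) := by
    rw [← hΦmp.map_eq, integral_map hΦmp.measurable.aemeasurable hgc.aestronglyMeasurable,
      pi_restrict_eq d S hmeasS]
  rw [hmap]
  have hcube : ∀ y ∈ Set.pi Set.univ fun _ : Fin d => S,
      J (torusDist 0 (fun i => ((y i : ℝ) : AddCircle (L:ℝ)))) =
        J (Real.sqrt (∑ i, (y i) ^ 2)) := by
    intro y hy
    congr 1
    unfold torusDist
    congr 1
    refine Finset.sum_congr rfl fun i _ => ?_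
    have hyi : y i ∈ Set.Ioc (-((L:ℝ)/2)) ((L:ℝ)/2) := by
      have := hy i (Set.mem_univ i)
      rwa [hSdef, show -((L:ℝ)/2) + L = (L:ℝ)/2 by ring] at this
    rw [show dist ((0 : Torus d L) i) ((fun i => ((y i : ℝ) : AddCircle (L:ℝ))) i)
        = ‖((y i : ℝ) : AddCircle (L:ℝ))‖ by simp [dist_zero_left]]
    rw [addCircle_norm_coe hyi, sq_abs]
  rw [setIntegral_congr_fun (MeasurableSet.univ_pi fun _ => hmeasS) hcube]
  calc (∫ y : Fin d → ℝ in Set.pi Set.univ fun _ => S, J (Real.sqrt (∑ i, (y i) ^ 2)))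
      ≤ ∫ y : Fin d → ℝ, J (Real.sqrt (∑ i, (y i) ^ 2)) :=
        setIntegral_le_integral (euclid_integrable hJ)
          (Filter.Eventually.of_forall fun y => hJ.nonneg _)
    _ = ∫ r : EuclideanSpace ℝ (Fin d), J ‖r‖ := by
        rw [← (EuclideanSpace.volume_preserving_symm_measurableEquiv_toLp (Fin d)).integral_comp
          (MeasurableEquiv.measurableEmbedding _)
          (fun y : Fin d → ℝ => J (Real.sqrt (∑ i, (y i) ^ 2)))]
        refine integral_congr_ae (Filter.Eventually.of_forall fun r => ?_)
        show J (Real.sqrt (∑ i, ((MeasurableEquiv.toLp 2 (Fin d → ℝ)).symm r i)^2)) = J ‖r‖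
        rw [EuclideanSpace.norm_eq]
        congr 2
        refine Finset.sum_congr rfl fun i _ => ?_
        rw [Real.norm_eq_abs, sq_abs]
        rfl
    _ = 1 := hJ.normalized

private lemma torus_volume (d L : ℕ) [hLf : Fact ((0:ℝ) < L)] :
    (volume (Set.univ : Set (Torus d L))).toReal = (L:ℝ)^d := by
  have hL : (0:ℝ) < L := hLf.out
  have h1 : volume (Set.univ : Set (Torus d L)) = (ENNReal.ofReal L)^d := by
    rw [show (Set.univ : Set (Torus d L)) = Set.pi Set.univ (fun _ => Set.univ) by
      rw [Set.pi_univ]]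
    rw [volume_pi_pi]
    simp [AddCircle.measure_univ]
  rw [h1, ← ENNReal.ofReal_pow hL.le, ENNReal.toReal_ofReal (pow_nonneg hL.le d)]

end Aux

/-- **Near Lipschitz continuity of `F`** (Theorem `nearlip`): there is a universal constant
`C > 0` such that for all `d ≥ 1`, integers `L ≥ 2`, `β > 1`, and measurable
`σ, σ₀ : T_L → [−1,1]` with `‖σ − σ₀‖_∞ ≤ h`, `0 < h`, `2h ≤ 1 − m_β`, one has
`|F(σ) − F(σ₀)| ≤ C · L^d · h · |log h|`. -/


theorem gpl_near_lipschitz :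
    ∃ C : ℝ, 0 < C ∧
      ∀ (d L : ℕ) [Fact ((0:ℝ) < L)], 1 ≤ d → 2 ≤ L →
      ∀ β : ℝ, 1 < β →
      ∀ J : ℝ → ℝ, KacPotential d J →
      ∀ mβ : ℝ, mβ ∈ Set.Ioo (0:ℝ) 1 → mβ = Real.tanh (β * mβ) →
      ∀ σ σ₀ : Torus d L → ℝ, Measurable σ → Measurable σ₀ →
      (∀ x, σ x ∈ Set.Icc (-1:ℝ) 1) → (∀ x, σ₀ x ∈ Set.Icc (-1:ℝ) 1) →
      ∀ h : ℝ, 0 < h → (∀ x, |σ x - σ₀ x| ≤ h) → 2 * h ≤ 1 - mβ →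
      |GPL d L β J σ - GPL d L β J σ₀| ≤ C * (L:ℝ) ^ d * h * |Real.log h| := by
  refine ⟨6, by norm_num, ?_⟩
  intro d L hLf hd hL β hβ J hJ mβ hmβ hmβeq σ σ₀ hσm hσ₀m hσr hσ₀r h h0 hdiff h2h
  have hL0 : (0:ℝ) < L := hLf.out
  have hh12 : h ≤ 1/2 := by have := hmβ.1; linarith
  have hVol := torus_volume d L
  have hLd : (0:ℝ) ≤ (L:ℝ)^d := pow_nonneg hL0.le d
  obtain ⟨M, hM⟩ := hJ.bounded
  have hM0 : 0 ≤ M := le_trans (abs_nonneg _) (hM 0)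
  -- entropy part
  have hIσ : Integrable (fun x : Torus d L => ient (σ x)) :=
    (integrable_const (2:ℝ)).mono'
      ((continuous_ient.measurable.comp hσm).aestronglyMeasurable)
      (Filter.Eventually.of_forall fun x => by
        rw [Real.norm_eq_abs]; exact ient_abs_le (hσr x))
  have hIσ₀ : Integrable (fun x : Torus d L => ient (σ₀ x)) :=
    (integrable_const (2:ℝ)).mono'
      ((continuous_ient.measurable.comp hσ₀m).aestronglyMeasurable)
      (Filter.Eventually.of_forall fun x => by
        rw [Real.norm_eq_abs]; exact ient_abs_le (hσ₀r x))
  have hE : |(∫ x, ient (σ x)) - ∫ x, ient (σ₀ x)| ≤ (4*h*|Real.log h|) * (L:ℝ)^d := by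
    rw [← integral_sub hIσ hIσ₀, ← Real.norm_eq_abs]
    calc ‖∫ x, (ient (σ x) - ient (σ₀ x))‖
        ≤ (4*h*|Real.log h|) * (volume (Set.univ : Set (Torus d L))).toReal :=
          norm_integral_le_of_norm_le_const (Filter.Eventually.of_forall fun x => by
            rw [Real.norm_eq_abs]
            exact ient_diff_bound (hσr x) (hσ₀r x) (hdiff x) h0 hh12)
      _ = (4*h*|Real.log h|) * (L:ℝ)^d := by rw [hVol]
  -- interaction part
  have hker : Continuous fun p : Torus d L × Torus d L => J (torusDist p.1 p.2) :=
    hJ.continuous.comp continuous_torusDist_pair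
  have hprodmeas : ∀ τ : Torus d L → ℝ, Measurable τ →
      AEStronglyMeasurable (fun p : Torus d L × Torus d L => J (torusDist p.1 p.2) * τ p.1 * τ p.2)
        ((volume : Measure (Torus d L)).prod volume) := fun τ hτ =>
    (((hker.measurable).mul (hτ.comp measurable_fst)).mul
      (hτ.comp measurable_snd)).aestronglyMeasurable
  have hprodint : ∀ τ : Torus d L → ℝ, Measurable τ → (∀ x, τ x ∈ Set.Icc (-1:ℝ) 1) →
      Integrable (fun p : Torus d L × Torus d L => J (torusDist p.1 p.2) * τ p.1 * τ p.2)
        ((volume : Measure (Torus d L)).prod volume) := by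
    intro τ hτ hτr
    refine (integrable_const M).mono' (hprodmeas τ hτ) (Filter.Eventually.of_forall fun p => ?_)
    rw [Real.norm_eq_abs, abs_mul, abs_mul]
    have h1 : |τ p.1| ≤ 1 := abs_le.2 ⟨(hτr p.1).1, (hτr p.1).2⟩
    have h2 : |τ p.2| ≤ 1 := abs_le.2 ⟨(hτr p.2).1, (hτr p.2).2⟩
    have h3 := hM (torusDist p.1 p.2)
    have t1 : |J (torusDist p.1 p.2)| * |τ p.1| ≤ M * 1 :=
      mul_le_mul h3 h1 (abs_nonneg _) hM0
    have t2 : |J (torusDist p.1 p.2)| * |τ p.1| * |τ p.2| ≤ M * 1 * 1 :=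
      mul_le_mul t1 h2 (abs_nonneg _) (by nlinarith)
    nlinarith
  have hGσ : Integrable (fun x : Torus d L => ∫ y, J (torusDist x y) * σ x * σ y) := by
    have := (hprodint σ hσm hσr).integral_prod_left
    simpa using this
  have hGσ₀ : Integrable (fun x : Torus d L => ∫ y, J (torusDist x y) * σ₀ x * σ₀ y) := by
    have := (hprodint σ₀ hσ₀m hσ₀r).integral_prod_left
    simpa using this
  have hinner : ∀ (τ : Torus d L → ℝ), Measurable τ → (∀ x, τ x ∈ Set.Icc (-1:ℝ) 1) →
      ∀ x : Torus d L, Integrable (fun y => J (torusDist x y) * τ x * τ y) := by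
    intro τ hτ hτr x
    refine (integrable_const M).mono'
      ((((hJ.continuous.comp (continuous_torusDist_right x)).measurable.mul
        measurable_const).mul hτ).aestronglyMeasurable)
      (Filter.Eventually.of_forall fun y => ?_)
    rw [Real.norm_eq_abs, abs_mul, abs_mul]
    have h1 : |τ x| ≤ 1 := abs_le.2 ⟨(hτr x).1, (hτr x).2⟩
    have h2 : |τ y| ≤ 1 := abs_le.2 ⟨(hτr y).1, (hτr y).2⟩
    have h3 := hM (torusDist x y)
    have t1 : |J (torusDist x y)| * |τ x| ≤ M * 1 :=
      mul_le_mul h3 h1 (abs_nonneg _) hM0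
    have t2 : |J (torusDist x y)| * |τ x| * |τ y| ≤ M * 1 * 1 :=
      mul_le_mul t1 h2 (abs_nonneg _) (by nlinarith)
    nlinarith
  have hJx : ∀ x : Torus d L, Integrable (fun y => J (torusDist x y)) := by
    intro x
    refine (integrable_const M).mono'
      ((hJ.continuous.comp (continuous_torusDist_right x)).measurable.aestronglyMeasurable)
      (Filter.Eventually.of_forall fun y => by rw [Real.norm_eq_abs]; exact hM _)
  have hpt : ∀ x : Torus d L,
      |(∫ y, J (torusDist x y) * σ x * σ y) - ∫ y, J (torusDist x y) * σ₀ x * σ₀ y| ≤ 2*h := by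
    intro x
    have hI1 := hinner σ hσm hσr x
    have hI2 := hinner σ₀ hσ₀m hσ₀r x
    rw [← integral_sub hI1 hI2, ← Real.norm_eq_abs]
    calc ‖∫ y, (J (torusDist x y) * σ x * σ y - J (torusDist x y) * σ₀ x * σ₀ y)‖
        ≤ ∫ y, ‖J (torusDist x y) * σ x * σ y - J (torusDist x y) * σ₀ x * σ₀ y‖ :=
          norm_integral_le_integral_norm _
      _ ≤ ∫ y, (2*h) * J (torusDist x y) := by
          refine integral_mono (hI1.sub hI2).norm ((hJx x).const_mul (2*h)) fun y => ?_
          rw [Real.norm_eq_abs,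
            show J (torusDist x y) * σ x * σ y - J (torusDist x y) * σ₀ x * σ₀ y
              = J (torusDist x y) * (σ x * σ y - σ₀ x * σ₀ y) by ring,
            abs_mul, abs_of_nonneg (hJ.nonneg _), mul_comm]
          refine mul_le_mul_of_nonneg_right ?_ (hJ.nonneg _)
          have e1 : σ x * σ y - σ₀ x * σ₀ y = σ x * (σ y - σ₀ y) + (σ x - σ₀ x) * σ₀ y := by
            ring
          have h1 : |σ x| ≤ 1 := abs_le.2 ⟨(hσr x).1, (hσr x).2⟩
          have h2 : |σ₀ y| ≤ 1 := abs_le.2 ⟨(hσ₀r y).1, (hσ₀r y).2⟩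
          calc |σ x * σ y - σ₀ x * σ₀ y|
              ≤ |σ x * (σ y - σ₀ y)| + |(σ x - σ₀ x) * σ₀ y| := by rw [e1]; exact abs_add_le _ _
            _ = |σ x| * |σ y - σ₀ y| + |σ x - σ₀ x| * |σ₀ y| := by rw [abs_mul, abs_mul]
            _ ≤ 1 * h + h * 1 :=
                add_le_add (mul_le_mul h1 (hdiff y) (abs_nonneg _) zero_le_one)
                  (mul_le_mul (hdiff x) h2 (abs_nonneg _) h0.le)
            _ = 2 * h := by ring
      _ = (2*h) * ∫ y, J (torusDist x y) := integral_const_mul _ _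
      _ ≤ (2*h) * 1 := mul_le_mul_of_nonneg_left (kernel_le_one hJ x) (by linarith)
      _ = 2*h := mul_one _
  have hInt : |(∫ x, ∫ y, J (torusDist x y) * σ x * σ y)
      - ∫ x, ∫ y, J (torusDist x y) * σ₀ x * σ₀ y| ≤ (2*h) * (L:ℝ)^d := by
    rw [← integral_sub hGσ hGσ₀, ← Real.norm_eq_abs]
    calc ‖∫ x, ((∫ y, J (torusDist x y) * σ x * σ y) - ∫ y, J (torusDist x y) * σ₀ x * σ₀ y)‖
        ≤ (2*h) * (volume (Set.univ : Set (Torus d L))).toReal :=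
          norm_integral_le_of_norm_le_const (Filter.Eventually.of_forall fun x => by
            rw [Real.norm_eq_abs]; exact hpt x)
      _ = (2*h) * (L:ℝ)^d := by rw [hVol]
  -- combine
  have hβ0 : (0:ℝ) < β := lt_trans one_pos hβ
  have hβ1 : 1/β ≤ 1 := by rw [div_le_one hβ0]; linarith
  have hβp : 0 < 1/β := by positivity
  unfold GPL
  have hsplit : (1 / β) * (∫ x, ient (σ x)) - (1 / 2) * (∫ x, ∫ y, J (torusDist x y) * σ x * σ y)
      - ((1 / β) * (∫ x, ient (σ₀ x))
        - (1 / 2) * (∫ x, ∫ y, J (torusDist x y) * σ₀ x * σ₀ y))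
      = (1/β) * ((∫ x, ient (σ x)) - ∫ x, ient (σ₀ x))
        - (1/2) * ((∫ x, ∫ y, J (torusDist x y) * σ x * σ y)
          - ∫ x, ∫ y, J (torusDist x y) * σ₀ x * σ₀ y) := by ring
  rw [hsplit]
  have hlh : Real.log h < 0 := Real.log_neg h0 (by linarith)
  have habs : |Real.log h| = -Real.log h := abs_of_neg hlh
  have hl2 : (0.6931471803 : ℝ) < Real.log 2 := Real.log_two_gt_d9
  have hloghalf : (1/2 : ℝ) ≤ |Real.log h| := by
    rw [habs]
    have : Real.log h ≤ Real.log (1/2) := Real.log_le_log h0 (by linarith)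
    rw [one_div, Real.log_inv] at this
    linarith
  have hA : 0 ≤ h * |Real.log h| := mul_nonneg h0.le (abs_nonneg _)
  calc |(1/β) * ((∫ x, ient (σ x)) - ∫ x, ient (σ₀ x))
        - (1/2) * ((∫ x, ∫ y, J (torusDist x y) * σ x * σ y)
          - ∫ x, ∫ y, J (torusDist x y) * σ₀ x * σ₀ y)|
      ≤ |(1/β) * ((∫ x, ient (σ x)) - ∫ x, ient (σ₀ x))|
        + |(1/2) * ((∫ x, ∫ y, J (torusDist x y) * σ x * σ y)
          - ∫ x, ∫ y, J (torusDist x y) * σ₀ x * σ₀ y)| := abs_sub _ _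
    _ ≤ (1/β) * ((4*h*|Real.log h|) * (L:ℝ)^d) + (1/2) * ((2*h) * (L:ℝ)^d) := by
        rw [abs_mul, abs_mul, abs_of_pos hβp, abs_of_pos (by norm_num : (0:ℝ) < 1/2)]
        gcongr
    _ ≤ 1 * ((4*h*|Real.log h|) * (L:ℝ)^d) + (1/2) * ((2*h) * (L:ℝ)^d) := by
        have hAnn : 0 ≤ (4*h*|Real.log h|) * (L:ℝ)^d := by positivity
        exact add_le_add (mul_le_mul_of_nonneg_right hβ1 hAnn) le_rfl
    _ ≤ 6 * (L:ℝ) ^ d * h * |Real.log h| := by nlinarith [mul_nonneg hLd hA, mul_nonneg hLd h0.le]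
end

section
/- There is a constant c > 0, depending only on the dimension d and on the Lipschitz constant of the map r ↦ J(|r|) on ℝ^d, with the following property. For all integers k > ℓ ≥ 1, every integer L ≥ 2, and every measurable σ : T_L → [−1,1], |∫_{T_L}∫_{T_L} J(|x−y|) σ(x)σ(y) dx dy − ∫_{T_L}∫_{T_L} J(|x−y|) (π^{(δ)}σ)(x)(π^{(δ)}σ)(y) dx dy| ≤ c · L^d · 2^{−ℓ}. -/
open MeasureTheory Real

open scoped Classical

/-- The representative coordinate in `[0, L)` of a point of the circle `ℝ/Lℤ`. -/
noncomputable def torusCoord {L : ℕ} [Fact ((0:ℝ) < L)] (x : AddCircle (L:ℝ)) : ℝ :=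
  ((AddCircle.equivIco (L:ℝ) 0) x).1

/-- Index of the dyadic cube of side `2^{-n}` (from the partition `Q^{(n)}`) containing `x`. -/
noncomputable def cubeIdx {d : ℕ} (L : ℕ) [Fact ((0:ℝ) < L)] (n : ℕ) (x : Torus d L) :
    Fin d → ℤ := fun i => ⌊torusCoord (x i) * 2 ^ n⌋

/-- The cube of the partition `Q^{(n)}` containing `x`. -/
noncomputable def cubeOf {d : ℕ} (L : ℕ) [Fact ((0:ℝ) < L)] (n : ℕ) (x : Torus d L) :
    Set (Torus d L) := {y | cubeIdx L n y = cubeIdx L n x}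

/-- Coarse graining `π^{(δ)}`: averaging over the cubes of side `2^{-n}` of `Q^{(n)}`. -/
noncomputable def coarse {d : ℕ} (L : ℕ) [Fact ((0:ℝ) < L)] (n : ℕ)
    (f : Torus d L → ℝ) : Torus d L → ℝ :=
  fun x => (∫ y in cubeOf L n x, f y) / (volume (cubeOf L n x)).toReal

/-- The microscopic lattice sites, indexing `γℤ^d ∩ T_L` with `γ = 2^{-k}`. -/
abbrev Site (d L k : ℕ) := Fin d → Fin (2 ^ k * L)

/-- Microscopic spin configurations (`true` = occupied, i.e. spin `+1`). -/
abbrev ConfigSpace (d L k : ℕ) := Site d L k → Bool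

/-- The spin value (`±1`) of a site. -/
def spin (b : Bool) : ℝ := if b then 1 else -1

/-- The position in the torus of a lattice site. -/
noncomputable def sitePos {d : ℕ} (L k : ℕ) (p : Site d L k) : Torus d L :=
  fun i => (((p i : ℝ) * (2:ℝ) ^ (-(k:ℤ)) : ℝ) : AddCircle (L:ℝ))

/-- The lattice site whose fine cube (of side `2^{-k}`) contains the point `x` of the torus. -/
noncomputable def siteOf {d : ℕ} (L k : ℕ) [Fact ((0:ℝ) < L)] (x : Torus d L) : Site d L k :=
  fun i => ⟨(⌊torusCoord (x i) * 2 ^ k⌋).toNat % (2 ^ k * L),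
    Nat.mod_lt _ (Nat.mul_pos (pow_pos (by norm_num) k)
      (by have h := (Fact.out : (0:ℝ) < L); exact_mod_cast h))⟩

/-- A microscopic configuration viewed as a `±1`-valued step function on the torus,
constant on each cube of the fine partition `Q^{(k)}`. -/
noncomputable def stepFun {d : ℕ} (L k : ℕ) [Fact ((0:ℝ) < L)]
    (s : ConfigSpace d L k) : Torus d L → ℝ :=
  fun x => spin (s (siteOf L k x))

/-- `γ = 2^{-k}`, the Kac scaling parameter. -/
noncomputable def gam (k : ℕ) : ℝ := (2:ℝ) ^ (-(k:ℤ))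

/-- The Kac Hamiltonian `H_{γ,L}(s) = -(γ^d/2) ∑_{x,y ∈ Λ_{L,γ}} J(|x-y|) s(x) s(y)`. -/
noncomputable def Ham {d : ℕ} (L k : ℕ) (J : ℝ → ℝ) (s : ConfigSpace d L k) : ℝ :=
  -((gam k) ^ d / 2) * ∑ p : Site d L k, ∑ q : Site d L k,
      J (torusDist (sitePos L k p) (sitePos L k q)) * spin (s p) * spin (s q)

/-- The number of occupied sites (sites with spin `+1`) of a configuration. -/
def numOnes {d : ℕ} (L k : ℕ) (s : ConfigSpace d L k) : ℕ :=
  (Finset.univ.filter fun p => s p = true).card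

/-- The canonical Gibbs probability, at inverse temperature `β` and particle number `Np`,
of an event `A` (as an event in `Ω_{L,γ,Np}`). -/
noncomputable def Pcan {d : ℕ} (L k : ℕ) (β : ℝ) (J : ℝ → ℝ) (Np : ℕ)
    (A : Set (ConfigSpace d L k)) : ℝ :=
  (∑ s ∈ Finset.univ.filter
      (fun s : ConfigSpace d L k => s ∈ A ∧ numOnes L k s = Np),
      Real.exp (-β * Ham L k J s)) /
  (∑ s ∈ Finset.univ.filter (fun s : ConfigSpace d L k => numOnes L k s = Np),
      Real.exp (-β * Ham L k J s))

/-- The lift of a function on the torus to a (periodic) function on `ℝ^d`. -/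
noncomputable def liftTorus {d L : ℕ} (φ : Torus d L → ℝ) : EuclideanSpace ℝ (Fin d) → ℝ :=
  fun v => φ (fun i => ((v i : ℝ) : AddCircle (L:ℝ)))

namespace L3
open Set

variable {L : ℕ} [Fact ((0:ℝ) < L)]

lemma Lpos : (0:ℝ) < L := Fact.out

lemma torusCoord_mem (x : AddCircle (L:ℝ)) : torusCoord x ∈ Set.Ico (0:ℝ) L := by
  have := ((AddCircle.equivIco (L:ℝ) 0) x).2
  simpa [torusCoord] using this

lemma measurable_torusCoord : Measurable (torusCoord (L := L)) :=
  measurable_subtype_coe.comp (AddCircle.measurableEquivIco (L:ℝ) 0).measurable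

lemma mk_torusCoord (x : AddCircle (L:ℝ)) : ((torusCoord x : ℝ) : AddCircle (L:ℝ)) = x :=
  (AddCircle.equivIco (L:ℝ) 0).symm_apply_apply x

lemma torusCoord_mk {t : ℝ} (h0 : 0 ≤ t) (h1 : t < L) :
    torusCoord ((t : ℝ) : AddCircle (L:ℝ)) = t := by
  have : torusCoord ((t : ℝ) : AddCircle (L:ℝ)) = toIcoMod Lpos 0 t := rfl
  rw [this, toIcoMod_eq_self]
  simpa using ⟨h0, h1⟩

lemma dist_mk_le (a b : ℝ) :
    dist ((a : ℝ) : AddCircle (L:ℝ)) ((b : ℝ) : AddCircle (L:ℝ)) ≤ |a - b| := by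
  rw [dist_eq_norm]
  have h : ((a : ℝ) : AddCircle (L:ℝ)) - ((b : ℝ) : AddCircle (L:ℝ))
      = ((a - b : ℝ) : AddCircle (L:ℝ)) := by exact_mod_cast rfl
  rw [h]
  simpa [Real.norm_eq_abs] using
    QuotientAddGroup.norm_mk_le_norm (S := AddSubgroup.zmultiples (L:ℝ)) (m := a - b)

lemma volume_coord_preimage {a b : ℝ} (h0 : 0 ≤ a) (hab : a ≤ b) (hb : b ≤ L) :
    volume (torusCoord ⁻¹' Set.Ico a b : Set (AddCircle (L:ℝ))) = ENNReal.ofReal (b - a) := by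
  have hmeas : MeasurableSet (torusCoord ⁻¹' Set.Ico a b : Set (AddCircle (L:ℝ))) :=
    measurable_torusCoord measurableSet_Ico
  have hproj : volume (torusCoord ⁻¹' Set.Ico a b : Set (AddCircle (L:ℝ)))
      = volume ((QuotientAddGroup.mk : ℝ → AddCircle (L:ℝ)) ⁻¹' (torusCoord ⁻¹' Set.Ico a b) ∩ Set.Ioc 0 (0 + (L:ℝ))) :=
    AddCircle.add_projection_respects_measure (L:ℝ) 0 hmeas
  rw [hproj]
  have hL : (0:ℝ) < L := Lpos
  apply le_antisymm
  · have hsub : ((QuotientAddGroup.mk : ℝ → AddCircle (L:ℝ)) ⁻¹' (torusCoord ⁻¹' Set.Ico a b) ∩ Set.Ioc 0 (0 + (L:ℝ)))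
        ⊆ Set.Icc a b ∪ {(L:ℝ)} := by
      rintro t ⟨ht1, ht2⟩
      simp only [Set.mem_preimage] at ht1
      rw [zero_add] at ht2
      rcases lt_or_eq_of_le ht2.2 with h | h
      · left
        rw [torusCoord_mk (le_of_lt ht2.1) h] at ht1
        exact ⟨ht1.1, ht1.2.le⟩
      · right; simp [h]
    calc volume _ ≤ volume (Set.Icc a b ∪ {(L:ℝ)}) := measure_mono hsub
      _ ≤ volume (Set.Icc a b) + volume ({(L:ℝ)} : Set ℝ) := measure_union_le _ _
      _ = ENNReal.ofReal (b - a) := by simp [Real.volume_Icc]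
  · have hsub2 : Set.Ioo a b
        ⊆ ((QuotientAddGroup.mk : ℝ → AddCircle (L:ℝ)) ⁻¹' (torusCoord ⁻¹' Set.Ico a b) ∩ Set.Ioc 0 (0 + (L:ℝ))) := by
      intro t ht
      have ht0 : 0 < t := lt_of_le_of_lt h0 ht.1
      have htL : t < L := lt_of_lt_of_le ht.2 hb
      refine ⟨?_, ?_⟩
      · simp only [Set.mem_preimage]
        rw [torusCoord_mk ht0.le htL]
        exact ⟨ht.1.le, ht.2⟩
      · rw [zero_add]; exact ⟨ht0, htL.le⟩
    calc ENNReal.ofReal (b - a) = volume (Set.Ioo a b) := by simp [Real.volume_Ioo]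
      _ ≤ _ := measure_mono hsub2

end L3

namespace L3

variable {d : ℕ} {L : ℕ} [Fact ((0:ℝ) < L)] {n : ℕ}

lemma pow2pos : (0:ℝ) < 2 ^ n := by positivity

lemma cubeIdx_nonneg (x : Torus d L) (i : Fin d) : 0 ≤ cubeIdx L n x i :=
  Int.floor_nonneg.2 (mul_nonneg (torusCoord_mem (x i)).1 pow2pos.le)

lemma cubeIdx_lt (x : Torus d L) (i : Fin d) : cubeIdx L n x i < 2 ^ n * L := by
  apply Int.floor_lt.2
  push_cast
  calc torusCoord (x i) * 2 ^ n < (L:ℝ) * 2 ^ n := by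
        exact mul_lt_mul_of_pos_right (torusCoord_mem (x i)).2 pow2pos
    _ = 2 ^ n * L := by ring

lemma mem_cubeOf_iff {x y : Torus d L} : y ∈ cubeOf L n x ↔ ∀ i,
    torusCoord (y i) ∈ Set.Ico ((cubeIdx L n x i : ℝ) / 2 ^ n)
      (((cubeIdx L n x i : ℝ) + 1) / 2 ^ n) := by
  constructor
  · intro h i
    have hi : ⌊torusCoord (y i) * 2 ^ n⌋ = cubeIdx L n x i := congrFun h i
    have := Int.floor_eq_iff.1 hi
    constructor
    · rw [div_le_iff₀ pow2pos]; exact this.1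
    · rw [lt_div_iff₀ pow2pos]; push_cast; exact this.2
  · intro h
    funext i
    have hi := h i
    apply Int.floor_eq_iff.2
    constructor
    · exact (div_le_iff₀ pow2pos).1 hi.1
    · push_cast at hi ⊢; exact (lt_div_iff₀ pow2pos).1 hi.2

lemma cubeOf_eq_pi (x : Torus d L) : cubeOf L n x = Set.pi Set.univ
    (fun i => torusCoord ⁻¹' Set.Ico ((cubeIdx L n x i : ℝ) / 2 ^ n)
      (((cubeIdx L n x i : ℝ) + 1) / 2 ^ n)) := by
  ext y
  rw [Set.mem_univ_pi]
  exact mem_cubeOf_iff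

lemma measurableSet_cubeOf (x : Torus d L) : MeasurableSet (cubeOf L n x) := by
  rw [cubeOf_eq_pi]
  exact MeasurableSet.univ_pi fun i => measurable_torusCoord measurableSet_Ico

lemma volume_cubeOf (x : Torus d L) :
    volume (cubeOf L n x) = ENNReal.ofReal (((2:ℝ) ^ n)⁻¹) ^ d := by
  rw [cubeOf_eq_pi, volume_pi_pi]
  have h : ∀ i : Fin d, volume (torusCoord ⁻¹' Set.Ico ((cubeIdx L n x i : ℝ) / 2 ^ n)
      (((cubeIdx L n x i : ℝ) + 1) / 2 ^ n) : Set (AddCircle (L:ℝ)))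
      = ENNReal.ofReal (((2:ℝ) ^ n)⁻¹) := by
    intro i
    have hm0 : (0:ℝ) ≤ (cubeIdx L n x i : ℝ) := by exact_mod_cast cubeIdx_nonneg x i
    have hmL : ((cubeIdx L n x i : ℝ) + 1) ≤ 2 ^ n * L := by
      have h1 : (cubeIdx L n x i : ℝ) + 1 ≤ ((2 ^ n * L : ℤ) : ℝ) := by
        exact_mod_cast cubeIdx_lt x i
      push_cast at h1; linarith
    rw [volume_coord_preimage (div_nonneg hm0 pow2pos.le)
        ((div_le_div_iff_of_pos_right pow2pos).2 (by linarith))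
        ((div_le_iff₀ pow2pos).2 (by linarith))]
    congr 1
    field_simp; ring
  simp only [h, Finset.prod_const, Finset.card_univ, Fintype.card_fin]

lemma volume_cubeOf_toReal (x : Torus d L) :
    (volume (cubeOf L n x)).toReal = (((2:ℝ) ^ n)⁻¹) ^ d := by
  rw [volume_cubeOf]
  rw [← ENNReal.ofReal_pow (by positivity)]
  rw [ENNReal.toReal_ofReal (by positivity)]

lemma volume_cubeOf_toReal_pos (x : Torus d L) :
    0 < (volume (cubeOf L n x)).toReal := by
  rw [volume_cubeOf_toReal]; positivity

lemma self_mem_cubeOf (x : Torus d L) : x ∈ cubeOf L n x := rfl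

lemma cubeOf_eq_of_mem {x y : Torus d L} (h : y ∈ cubeOf L n x) :
    cubeOf L n y = cubeOf L n x := by
  have h' : cubeIdx L n y = cubeIdx L n x := h
  unfold cubeOf
  rw [h']

lemma dist_coord_of_mem_cube {x y y' : Torus d L} (hy : y ∈ cubeOf L n x)
    (hy' : y' ∈ cubeOf L n x) (i : Fin d) : dist (y i) (y' i) ≤ ((2:ℝ) ^ n)⁻¹ := by
  have h1 := mem_cubeOf_iff.1 hy i
  have h2 := mem_cubeOf_iff.1 hy' i
  calc dist (y i) (y' i)
      = dist ((torusCoord (y i) : ℝ) : AddCircle (L:ℝ)) ((torusCoord (y' i) : ℝ) : AddCircle (L:ℝ)) := by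
        rw [mk_torusCoord, mk_torusCoord]
    _ ≤ |torusCoord (y i) - torusCoord (y' i)| := dist_mk_le _ _
    _ ≤ ((2:ℝ) ^ n)⁻¹ := by
        rw [abs_le]
        have e : ((cubeIdx L n x i : ℝ) + 1) / 2 ^ n - (cubeIdx L n x i : ℝ) / 2 ^ n
            = ((2:ℝ) ^ n)⁻¹ := by field_simp; ring
        constructor
        · have := h1.1; have := h2.2; nlinarith [pow2pos (n := n)]
        · have := h1.2; have := h2.1; nlinarith [pow2pos (n := n)]

end L3

namespace L3

lemma torusDist_nonneg {d L : ℕ} (x y : Torus d L) : 0 ≤ torusDist x y := Real.sqrt_nonneg _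

lemma torusDist_comm {d L : ℕ} (x y : Torus d L) : torusDist x y = torusDist y x := by
  unfold torusDist; congr 1; exact Finset.sum_congr rfl fun i _ => by rw [dist_comm]

lemma norm_euclid {d : ℕ} (u : EuclideanSpace ℝ (Fin d)) (hu : ∀ i, 0 ≤ u i) :
    ‖u‖ = Real.sqrt (∑ i, (u i) ^ 2) := by
  rw [EuclideanSpace.norm_eq]
  congr 1
  exact Finset.sum_congr rfl fun i _ => by rw [Real.norm_eq_abs, sq_abs]

lemma torusDist_triangle {d L : ℕ} (x y z : Torus d L) :
    torusDist x z ≤ torusDist x y + torusDist y z := by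
  classical
  let u : EuclideanSpace ℝ (Fin d) := WithLp.toLp 2 (fun i => dist (x i) (y i))
  let v : EuclideanSpace ℝ (Fin d) := WithLp.toLp 2 (fun i => dist (y i) (z i))
  have hu : ‖u‖ = torusDist x y := norm_euclid u fun i => dist_nonneg
  have hv : ‖v‖ = torusDist y z := norm_euclid v fun i => dist_nonneg
  have huv : ‖u + v‖ = Real.sqrt (∑ i, (dist (x i) (y i) + dist (y i) (z i)) ^ 2) := by
    have h := norm_euclid (u + v) (fun i => add_nonneg dist_nonneg dist_nonneg)
    simpa using h
  have h1 : torusDist x z ≤ ‖u + v‖ := by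
    rw [huv]
    apply Real.sqrt_le_sqrt
    apply Finset.sum_le_sum
    intro i _
    have := dist_triangle (x i) (z i) (y i)
    nlinarith [dist_nonneg (x := x i) (y := z i), dist_nonneg (x := x i) (y := y i),
      dist_nonneg (x := y i) (y := z i), dist_triangle (x i) (y i) (z i)]
  calc torusDist x z ≤ ‖u + v‖ := h1
    _ ≤ ‖u‖ + ‖v‖ := norm_add_le u v
    _ = _ := by rw [hu, hv]

lemma abs_torusDist_sub {d L : ℕ} (x y y' : Torus d L) :
    |torusDist x y - torusDist x y'| ≤ torusDist y y' := by
  rw [abs_le]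
  constructor
  · have h1 := torusDist_triangle x y y'
    linarith
  · have h2 := torusDist_triangle x y' y
    have hc := torusDist_comm y' y
    linarith

lemma dist_coord_le_torusDist {d L : ℕ} (x y : Torus d L) (i : Fin d) :
    dist (x i) (y i) ≤ torusDist x y := by
  have h : (dist (x i) (y i)) ^ 2 ≤ ∑ j, (dist (x j) (y j)) ^ 2 :=
    Finset.single_le_sum (f := fun j => (dist (x j) (y j)) ^ 2)
      (fun j _ => sq_nonneg _) (Finset.mem_univ i)
  calc dist (x i) (y i) = Real.sqrt ((dist (x i) (y i)) ^ 2) := by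
        rw [Real.sqrt_sq dist_nonneg]
    _ ≤ torusDist x y := Real.sqrt_le_sqrt h

lemma torusDist_le {d L : ℕ} (x y : Torus d L) {r : ℝ} (hr : 0 ≤ r)
    (h : ∀ i, dist (x i) (y i) ≤ r) : torusDist x y ≤ Real.sqrt d * r := by
  have : torusDist x y ≤ Real.sqrt (∑ _i : Fin d, r ^ 2) := by
    apply Real.sqrt_le_sqrt
    exact Finset.sum_le_sum fun i _ => by nlinarith [dist_nonneg (x := x i) (y := y i), h i]
  calc torusDist x y ≤ Real.sqrt (∑ _i : Fin d, r ^ 2) := this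
    _ = Real.sqrt d * r := by
        rw [Finset.sum_const, Finset.card_univ, Fintype.card_fin, nsmul_eq_mul,
          Real.sqrt_mul (by positivity), Real.sqrt_sq hr]

lemma J_lip {d : ℕ} (hd : 1 ≤ d) {K : NNReal} {J : ℝ → ℝ}
    (hLip : LipschitzWith K (fun r : EuclideanSpace ℝ (Fin d) => J ‖r‖))
    {a b : ℝ} (ha : 0 ≤ a) (hb : 0 ≤ b) : |J a - J b| ≤ K * |a - b| := by
  have i0 : Fin d := ⟨0, hd⟩
  have h := hLip.dist_le_mul (EuclideanSpace.single i0 a) (EuclideanSpace.single i0 b)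
  rw [EuclideanSpace.norm_single, EuclideanSpace.norm_single,
    EuclideanSpace.dist_single_same] at h
  rw [Real.norm_eq_abs, Real.norm_eq_abs, abs_of_nonneg ha, abs_of_nonneg hb] at h
  rw [Real.dist_eq, Real.dist_eq] at h
  exact h

end L3

namespace L3

variable {d L : ℕ} [Fact ((0:ℝ) < L)] {n : ℕ}

lemma volume_torus_univ : (volume (Set.univ : Set (Torus d L))) = ENNReal.ofReal L ^ d := by
  rw [volume_pi, MeasureTheory.Measure.pi_univ]
  simp [AddCircle.measure_univ]

lemma volume_torus_univ_toReal : (volume (Set.univ : Set (Torus d L))).toReal = (L:ℝ) ^ d := by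
  rw [volume_torus_univ, ← ENNReal.ofReal_pow (by positivity),
    ENNReal.toReal_ofReal (by positivity)]

lemma integrable_of_bound (F : Torus d L → ℝ) (hF : Measurable F) (C : ℝ)
    (hC : ∀ x, |F x| ≤ C) : Integrable F (volume) :=
  (integrable_const C).mono' hF.aestronglyMeasurable
    (Filter.Eventually.of_forall fun x => by simpa [Real.norm_eq_abs] using hC x)

lemma coarse_eq_of_mem (σ : Torus d L → ℝ) {x y : Torus d L} (h : y ∈ cubeOf L n x) :
    coarse L n σ y = coarse L n σ x := by
  unfold coarse
  rw [cubeOf_eq_of_mem h]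

lemma abs_coarse_le_one (σ : Torus d L → ℝ) (hσb : ∀ x, σ x ∈ Set.Icc (-1:ℝ) 1)
    (x : Torus d L) : |coarse L n σ x| ≤ 1 := by
  have hvol := volume_cubeOf_toReal_pos (n := n) x
  have hnum : |∫ y in cubeOf L n x, σ y| ≤ 1 * (volume (cubeOf L n x)).toReal := by
    have := norm_setIntegral_le_of_norm_le_const (μ := volume) (f := σ)
      (s := cubeOf L n x) (measure_lt_top volume _)
      (fun y _ => by rw [Real.norm_eq_abs, abs_le]; exact ⟨(hσb y).1, (hσb y).2⟩)
    simpa [Real.norm_eq_abs, measureReal_def] using this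
  unfold coarse
  rw [abs_div, abs_of_pos hvol, div_le_one hvol]
  linarith

lemma measurable_cubeIdx : Measurable (cubeIdx L n : Torus d L → Fin d → ℤ) :=
  measurable_pi_lambda _ fun i =>
    ((measurable_torusCoord.comp (measurable_pi_apply i)).mul_const _).floor

lemma measurable_coarse (σ : Torus d L → ℝ) : Measurable (coarse L n σ) := by
  have h : coarse L n σ = (fun m : Fin d → ℤ =>
      (∫ y in {y : Torus d L | cubeIdx L n y = m}, σ y) /
        (volume {y : Torus d L | cubeIdx L n y = m}).toReal) ∘ (cubeIdx L n) := rfl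
  rw [h]
  exact (measurable_of_countable _).comp measurable_cubeIdx

lemma setIntegral_coarse (σ : Torus d L → ℝ) (x : Torus d L) :
    ∫ y in cubeOf L n x, coarse L n σ y = ∫ y in cubeOf L n x, σ y := by
  rw [setIntegral_congr_fun (measurableSet_cubeOf x)
    (fun y hy => coarse_eq_of_mem σ hy), setIntegral_const, smul_eq_mul]
  unfold coarse
  rw [measureReal_def, mul_div_cancel₀ _ (volume_cubeOf_toReal_pos (n := n) x).ne']

lemma setIntegral_diff_zero (σ : Torus d L → ℝ) (hσm : Measurable σ)
    (hσb : ∀ x, σ x ∈ Set.Icc (-1:ℝ) 1) (x : Torus d L) :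
    ∫ y in cubeOf L n x, (σ y - coarse L n σ y) = 0 := by
  rw [integral_sub
    ((integrable_of_bound σ hσm 1 (fun y => abs_le.2 ⟨(hσb y).1, (hσb y).2⟩)).integrableOn)
    ((integrable_of_bound (coarse L n σ) (measurable_coarse σ) 1
      (abs_coarse_le_one σ hσb)).integrableOn)]
  rw [setIntegral_coarse]
  ring

end L3

namespace L3

variable {d L : ℕ} [Fact ((0:ℝ) < L)] {n : ℕ}

noncomputable def rep (L n : ℕ) [Fact ((0:ℝ) < L)] (m : Fin d → ℤ) : Torus d L :=
  fun i => ((((m i : ℝ) + 1/2) / 2 ^ n : ℝ) : AddCircle (L:ℝ))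

lemma cubeIdx_rep {m : Fin d → ℤ} (hm : ∀ i, 0 ≤ m i ∧ m i < 2 ^ n * L) :
    cubeIdx L n (rep L n m) = m := by
  funext i
  have hm1 : (0:ℝ) ≤ (m i : ℝ) := by exact_mod_cast (hm i).1
  have hm2 : (m i : ℝ) + 1 ≤ 2 ^ n * L := by
    have : (m i : ℝ) + 1 ≤ ((2 ^ n * L : ℤ) : ℝ) := by exact_mod_cast (hm i).2
    push_cast at this; linarith
  have h0 : (0:ℝ) ≤ ((m i : ℝ) + 1/2) / 2 ^ n := div_nonneg (by linarith) pow2pos.le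
  have h1 : ((m i : ℝ) + 1/2) / 2 ^ n < L := (div_lt_iff₀ pow2pos).2 (by nlinarith)
  show ⌊torusCoord ((((m i : ℝ) + 1/2) / 2 ^ n : ℝ) : AddCircle (L:ℝ)) * 2 ^ n⌋ = m i
  rw [torusCoord_mk h0 h1, div_mul_cancel₀ _ pow2pos.ne']
  rw [Int.floor_eq_iff]
  constructor <;> push_cast <;> linarith

lemma inner_bound (hd : 1 ≤ d) {K : NNReal} {J : ℝ → ℝ}
    (hJc : Continuous J) (hJs : ∀ r, 1 < r → J r = 0)
    (hLip : LipschitzWith K (fun r : EuclideanSpace ℝ (Fin d) => J ‖r‖))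
    (h : Torus d L → ℝ) (hm : Measurable h) (hb : ∀ y, |h y| ≤ 2)
    (hzero : ∀ z, ∫ y in cubeOf L n z, h y = 0) (x : Torus d L) :
    |∫ y, J (torusDist x y) * h y| ≤
      (2 * K * Real.sqrt d * 4 ^ d) * (((2:ℝ) ^ n)⁻¹) := by
  classical
  set T : Finset (Fin d → ℤ) := Fintype.piFinset fun _ : Fin d => Finset.Ico (0:ℤ) (2^n * L)
    with hT
  set P : (Fin d → ℤ) → Set (Torus d L) := fun m => cubeOf L n (rep L n m) with hP
  have hmemT : ∀ m : Fin d → ℤ, m ∈ T ↔ ∀ i, 0 ≤ m i ∧ m i < 2 ^ n * L := by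
    intro m
    simp [hT, Fintype.mem_piFinset, Finset.mem_Ico, forall_and]
  have hidx : ∀ m ∈ T, cubeIdx L n (rep L n m) = m := fun m hmem =>
    cubeIdx_rep ((hmemT m).1 hmem)
  have hPmem : ∀ y : Torus d L, cubeIdx L n y ∈ T ∧ y ∈ P (cubeIdx L n y) := by
    intro y
    have h1 : cubeIdx L n y ∈ T := (hmemT _).2 fun i => ⟨cubeIdx_nonneg y i, cubeIdx_lt y i⟩
    refine ⟨h1, ?_⟩
    show cubeIdx L n y = cubeIdx L n (rep L n (cubeIdx L n y))
    rw [hidx _ h1]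
  have hunion : (⋃ m ∈ T, P m) = Set.univ := by
    apply Set.eq_univ_of_forall
    intro y
    exact Set.mem_biUnion (hPmem y).1 (hPmem y).2
  have hdisj : (↑T : Set (Fin d → ℤ)).Pairwise (Function.onFun Disjoint P) := by
    intro m hmT m' hm'T hne
    rw [Function.onFun, Set.disjoint_left]
    intro y hy hy'
    have e1 : cubeIdx L n y = m := by
      have : cubeIdx L n y = cubeIdx L n (rep L n m) := hy
      rw [this, hidx _ hmT]
    have e2 : cubeIdx L n y = m' := by
      have : cubeIdx L n y = cubeIdx L n (rep L n m') := hy'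
      rw [this, hidx _ hm'T]
    exact hne (e1 ▸ e2)
  have hJb : ∀ a : ℝ, 0 ≤ a → |J a| ≤ 2 * K := by
    intro a ha
    have h1 := J_lip hd hLip ha (by linarith : (0:ℝ) ≤ a + 2)
    rw [hJs (a + 2) (by linarith)] at h1
    simp only [sub_zero] at h1
    calc |J a| ≤ K * |a - (a + 2)| := h1
      _ = 2 * K := by rw [show a - (a+2) = -2 by ring]; simp [abs_of_nonpos]; ring
  have hdistcont : Continuous (fun y : Torus d L => torusDist x y) := by
    unfold torusDist
    apply Real.continuous_sqrt.comp
    apply continuous_finset_sum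
    intro i _
    exact (continuous_const.dist (continuous_apply i)).pow 2
  have hfm : Measurable (fun y => J (torusDist x y) * h y) :=
    ((hJc.comp hdistcont).measurable).mul hm
  have hfb : ∀ y, |J (torusDist x y) * h y| ≤ 2 * K * 2 := by
    intro y
    rw [abs_mul]
    have := hJb _ (torusDist_nonneg x y)
    have := hb y
    have habs : (0:ℝ) ≤ |J (torusDist x y)| := abs_nonneg _
    nlinarith
  have hfInt : Integrable (fun y => J (torusDist x y) * h y) volume :=
    integrable_of_bound _ hfm _ hfb
  -- decompose the integral
  have hsplit : ∫ y, J (torusDist x y) * h y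
      = ∑ m ∈ T, ∫ y in P m, J (torusDist x y) * h y := by
    rw [← setIntegral_univ, ← hunion]
    exact integral_biUnion_finset T (fun m _ => measurableSet_cubeOf _) hdisj
      (fun m _ => hfInt.integrableOn)
  -- replace by centered version
  have hcenter : ∀ m ∈ T, ∫ y in P m, J (torusDist x y) * h y
      = ∫ y in P m, (J (torusDist x y) - J (torusDist x (rep L n m))) * h y := by
    intro m _
    have hInth : IntegrableOn h (P m) volume :=
      (integrable_of_bound h hm 2 hb).integrableOn
    have e : ∫ y in P m, (J (torusDist x y) - J (torusDist x (rep L n m))) * h y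
        = (∫ y in P m, J (torusDist x y) * h y)
          - J (torusDist x (rep L n m)) * ∫ y in P m, h y := by
      have e2 : (fun y => (J (torusDist x y) - J (torusDist x (rep L n m))) * h y)
          = fun y => J (torusDist x y) * h y
            - J (torusDist x (rep L n m)) * h y := by funext y; ring
      rw [e2, integral_sub hfInt.integrableOn (hInth.const_mul _), MeasureTheory.integral_const_mul]
    rw [e, hzero (rep L n m), mul_zero, sub_zero]
  set T' : Finset (Fin d → ℤ) := T.filter (fun m => ∃ y ∈ P m, torusDist x y ≤ 1) with hT'
  have hvanish : ∀ m ∈ T, m ∉ T' →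
      ∫ y in P m, (J (torusDist x y) - J (torusDist x (rep L n m))) * h y = 0 := by
    intro m hmT hmT'
    have hfar : ∀ y ∈ P m, 1 < torusDist x y := by
      intro y hy
      by_contra hcon
      exact hmT' (Finset.mem_filter.2 ⟨hmT, ⟨y, hy, le_of_not_gt hcon⟩⟩)
    have : Set.EqOn (fun y => (J (torusDist x y) - J (torusDist x (rep L n m))) * h y)
        (fun _ => (0:ℝ)) (P m) := by
      intro y hy
      have h1 : J (torusDist x y) = 0 := hJs _ (hfar y hy)
      have h2 : J (torusDist x (rep L n m)) = 0 :=
        hJs _ (hfar _ (self_mem_cubeOf (rep L n m)))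
      simp [h1, h2]
    rw [setIntegral_congr_fun (measurableSet_cubeOf _) this]
    simp
  have hsum' : ∑ m ∈ T, ∫ y in P m, (J (torusDist x y) - J (torusDist x (rep L n m))) * h y
      = ∑ m ∈ T', ∫ y in P m, (J (torusDist x y) - J (torusDist x (rep L n m))) * h y :=
    (Finset.sum_subset (Finset.filter_subset _ _) (fun m hmT hmT' => hvanish m hmT hmT')).symm
  -- bound each active cube
  set C : ℝ := 2 * K * Real.sqrt d * ((2:ℝ) ^ n)⁻¹ with hC
  have hCnn : 0 ≤ C := by positivity
  have hbound : ∀ m ∈ T', |∫ y in P m, (J (torusDist x y) - J (torusDist x (rep L n m))) * h y|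
      ≤ C * (volume (P m)).toReal := by
    intro m _
    have hpt : ∀ y ∈ P m, ‖(J (torusDist x y) - J (torusDist x (rep L n m))) * h y‖ ≤ C := by
      intro y hy
      rw [Real.norm_eq_abs, abs_mul]
      have h1 : |J (torusDist x y) - J (torusDist x (rep L n m))|
          ≤ K * torusDist y (rep L n m) := by
        calc |J (torusDist x y) - J (torusDist x (rep L n m))|
            ≤ K * |torusDist x y - torusDist x (rep L n m)| :=
              J_lip hd hLip (torusDist_nonneg _ _) (torusDist_nonneg _ _)
          _ ≤ K * torusDist y (rep L n m) := by
              have := abs_torusDist_sub x y (rep L n m)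
              have : (0:ℝ) ≤ (K:ℝ) := K.2
              nlinarith [abs_torusDist_sub x y (rep L n m), abs_nonneg (torusDist x y - torusDist x (rep L n m))]
      have h2 : torusDist y (rep L n m) ≤ Real.sqrt d * ((2:ℝ) ^ n)⁻¹ := by
        apply torusDist_le _ _ (by positivity)
        intro i
        exact dist_coord_of_mem_cube hy (self_mem_cubeOf (rep L n m)) i
      have h3 := hb y
      have hK : (0:ℝ) ≤ (K:ℝ) := K.2
      have hd0 : (0:ℝ) ≤ Real.sqrt d * ((2:ℝ) ^ n)⁻¹ := by positivity
      have h4 : |J (torusDist x y) - J (torusDist x (rep L n m))|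
          ≤ K * (Real.sqrt d * ((2:ℝ) ^ n)⁻¹) := by nlinarith [torusDist_nonneg y (rep L n m)]
      rw [hC]
      nlinarith [abs_nonneg (J (torusDist x y) - J (torusDist x (rep L n m))), abs_nonneg (h y)]
    have hnorm := norm_setIntegral_le_of_norm_le_const (μ := volume)
      (s := P m) (measure_lt_top volume _) hpt
    simpa [Real.norm_eq_abs, measureReal_def] using hnorm
  -- the active cubes sit inside a ball of radius 2
  have hball : (⋃ m ∈ T', P m) ⊆ Set.pi Set.univ (fun i => Metric.closedBall (x i) 2) := by
    intro y hy
    rcases Set.mem_iUnion₂.1 hy with ⟨m, hmT', hym⟩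
    rcases (Finset.mem_filter.1 hmT').2 with ⟨w, hwm, hw1⟩
    rw [Set.mem_univ_pi]
    intro i
    rw [Metric.mem_closedBall]
    have h1 : dist (y i) (w i) ≤ ((2:ℝ) ^ n)⁻¹ := dist_coord_of_mem_cube hym hwm i
    have h2 : dist (x i) (w i) ≤ torusDist x w := dist_coord_le_torusDist x w i
    have h2n : (1:ℝ) ≤ 2 ^ n := one_le_pow₀ (by norm_num)
    have h3 : ((2:ℝ) ^ n)⁻¹ ≤ 1 := by
      rw [inv_le_one₀ pow2pos]; exact h2n
    have h4 : dist (w i) (x i) = dist (x i) (w i) := dist_comm _ _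
    calc dist (y i) (x i) ≤ dist (y i) (w i) + dist (w i) (x i) := dist_triangle _ _ _
      _ ≤ 2 := by rw [h4]; linarith
  have hvolball : (volume (Set.pi Set.univ fun i : Fin d => Metric.closedBall (x i) 2)).toReal
      ≤ 4 ^ d := by
    rw [volume_pi, MeasureTheory.Measure.pi_pi]
    have he : ∀ i : Fin d, volume (Metric.closedBall (x i) 2) = ENNReal.ofReal (min (L:ℝ) 4) :=
      fun i => by rw [AddCircle.volume_closedBall]; norm_num
    simp only [he, Finset.prod_const, Finset.card_univ, Fintype.card_fin]
    rw [← ENNReal.ofReal_pow (le_min (by positivity) (by norm_num)),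
      ENNReal.toReal_ofReal (by positivity)]
    exact pow_le_pow_left₀ (le_min (by positivity) (by norm_num)) (min_le_right _ _) d
  have hsumvol : ∑ m ∈ T', (volume (P m)).toReal ≤ 4 ^ d := by
    have hdisj' : (↑T' : Set (Fin d → ℤ)).Pairwise (Function.onFun Disjoint P) :=
      hdisj.mono (Finset.coe_subset.2 (Finset.filter_subset _ _))
    have hmeq : volume (⋃ m ∈ T', P m) = ∑ m ∈ T', volume (P m) :=
      measure_biUnion_finset hdisj' (fun m _ => measurableSet_cubeOf _)
    have hfin : volume (Set.pi Set.univ fun i : Fin d => Metric.closedBall (x i) 2) ≠ ⊤ :=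
      measure_ne_top _ _
    have hle : volume (⋃ m ∈ T', P m)
        ≤ volume (Set.pi Set.univ fun i : Fin d => Metric.closedBall (x i) 2) :=
      measure_mono hball
    calc ∑ m ∈ T', (volume (P m)).toReal
        = (∑ m ∈ T', volume (P m)).toReal :=
          (ENNReal.toReal_sum fun m _ => measure_ne_top _ _).symm
      _ = (volume (⋃ m ∈ T', P m)).toReal := by rw [hmeq]
      _ ≤ _ := ENNReal.toReal_mono hfin hle
      _ ≤ 4 ^ d := hvolball
  have hrw : |∫ y, J (torusDist x y) * h y|
      = |∑ m ∈ T', ∫ y in P m, (J (torusDist x y) - J (torusDist x (rep L n m))) * h y| := by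
    rw [hsplit, Finset.sum_congr rfl hcenter, hsum']
  rw [hrw]
  calc |∑ m ∈ T', ∫ y in P m, (J (torusDist x y) - J (torusDist x (rep L n m))) * h y|
      ≤ ∑ m ∈ T', |∫ y in P m, (J (torusDist x y) - J (torusDist x (rep L n m))) * h y| :=
        Finset.abs_sum_le_sum_abs _ _
    _ ≤ ∑ m ∈ T', C * (volume (P m)).toReal := Finset.sum_le_sum hbound
    _ = C * ∑ m ∈ T', (volume (P m)).toReal := by rw [Finset.mul_sum]
    _ ≤ C * 4 ^ d := mul_le_mul_of_nonneg_left hsumvol hCnn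
    _ = 2 * K * Real.sqrt d * 4 ^ d * (((2:ℝ) ^ n)⁻¹) := by rw [hC]; ring

end L3

set_option maxHeartbeats 1000000

/-- **Coarse graining and the interaction term** (Lemma `lemma3`): there is a constant `c > 0`,
depending only on `d` and on the Lipschitz constant `K` of `r ↦ J(|r|)` on `ℝ^d`, such that
for all integers `k > ℓ ≥ 1`, every integer `L ≥ 2`, and every measurable `σ : T_L → [−1,1]`,
the interaction integrals of `σ` and of `π^{(δ)}σ` differ by at most `c · L^d · 2^{−ℓ}`. -/
theorem interaction_coarse_estimate (d : ℕ) (hd : 1 ≤ d) (K : NNReal) :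
    ∃ c : ℝ, 0 < c ∧
      ∀ J : ℝ → ℝ, KacPotential d J →
      LipschitzWith K (fun r : EuclideanSpace ℝ (Fin d) => J ‖r‖) →
      ∀ (L k ℓ : ℕ) [Fact ((0:ℝ) < L)], 2 ≤ L → 1 ≤ ℓ → ℓ < k →
      ∀ σ : Torus d L → ℝ, Measurable σ → (∀ x, σ x ∈ Set.Icc (-1:ℝ) 1) →
      |(∫ x, ∫ y, J (torusDist x y) * σ x * σ y)
          - ∫ x, ∫ y, J (torusDist x y) * coarse L ℓ σ x * coarse L ℓ σ y|
        ≤ c * (L:ℝ) ^ d * 2 ^ (-(ℓ:ℤ)) := by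
  refine ⟨4 * K * Real.sqrt d * 4 ^ d + 1, by positivity, ?_⟩
  intro J hJ hLip L k ℓ instL hL hℓ hlk σ hσm hσb
  obtain ⟨M, hM⟩ := hJ.bounded
  have hM0 : 0 ≤ M := le_trans (abs_nonneg _) (hM 0)
  have hK : (0:ℝ) ≤ (K:ℝ) := K.2
  set pc : Torus d L → ℝ := coarse L ℓ σ with hpcdef
  set h : Torus d L → ℝ := fun y => σ y - pc y with hh
  have hσb' : ∀ x, |σ x| ≤ 1 := fun x => abs_le.2 ⟨(hσb x).1, (hσb x).2⟩
  have hpcm : Measurable pc := L3.measurable_coarse σ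
  have hpcb : ∀ x, |pc x| ≤ 1 := L3.abs_coarse_le_one σ hσb
  have hhm : Measurable h := hσm.sub hpcm
  have hhb : ∀ y, |h y| ≤ 2 := fun y => by
    have h1 := hσb' y; have h2 := hpcb y
    calc |h y| = |σ y - pc y| := rfl
      _ ≤ |σ y| + |pc y| := abs_sub _ _
      _ ≤ 2 := by linarith
  have hzero : ∀ z, ∫ y in cubeOf L ℓ z, h y = 0 := L3.setIntegral_diff_zero σ hσm hσb
  set C₁ : ℝ := (2 * K * Real.sqrt d * 4 ^ d) * (((2:ℝ) ^ ℓ)⁻¹) with hC₁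
  have hC₁nn : 0 ≤ C₁ := by positivity
  have hg : ∀ x : Torus d L, |∫ y, J (torusDist x y) * h y| ≤ C₁ :=
    L3.inner_bound hd hJ.continuous hJ.support hLip h hhm hhb hzero
  have hker : Continuous (fun p : Torus d L × Torus d L => J (torusDist p.1 p.2)) := by
    apply hJ.continuous.comp
    unfold torusDist
    apply Real.continuous_sqrt.comp
    apply continuous_finset_sum
    intro i _
    exact (((continuous_apply i).comp continuous_fst).dist
      ((continuous_apply i).comp continuous_snd)).pow 2
  have hdc : ∀ x : Torus d L, Continuous fun y : Torus d L => torusDist x y := by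
    intro x
    unfold torusDist
    apply Real.continuous_sqrt.comp
    apply continuous_finset_sum
    intro i _
    exact (continuous_const.dist (continuous_apply i)).pow 2
  -- integrability of kernels against bounded functions
  have hIntK : ∀ (F : Torus d L → ℝ), Measurable F → ∀ (B : ℝ), (∀ y, |F y| ≤ B) →
      ∀ x, Integrable (fun y => J (torusDist x y) * F y) volume := by
    intro F hF B hFb x
    apply L3.integrable_of_bound _ (((hJ.continuous.comp (hdc x)).measurable).mul hF) (M * B)
    intro y
    simp only [Pi.mul_apply, Function.comp_apply]
    rw [abs_mul]
    have h1 := hM (torusDist x y)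
    have h2 := hFb y
    have h3 : (0:ℝ) ≤ |F y| := abs_nonneg _
    nlinarith [abs_nonneg (J (torusDist x y))]
  -- measurability of parametric integrals
  have hSm : ∀ (F : Torus d L → ℝ), Measurable F →
      Measurable (fun x => ∫ y, J (torusDist x y) * F y) := by
    intro F hF
    have hsm : StronglyMeasurable
        (fun p : Torus d L × Torus d L => J (torusDist p.1 p.2) * F p.2) :=
      ((hker.measurable).mul (hF.comp measurable_snd)).stronglyMeasurable
    exact hsm.integral_prod_right'.measurable
  -- uniform bound on parametric integrals
  have hSb : ∀ (F : Torus d L → ℝ), (∀ y, |F y| ≤ 2) →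
      ∀ x, |∫ y, J (torusDist x y) * F y| ≤ M * 2 * (L:ℝ) ^ d := by
    intro F hFb x
    have hbd : ∀ᵐ y ∂(volume : Measure (Torus d L)),
        ‖J (torusDist x y) * F y‖ ≤ M * 2 := by
      apply Filter.Eventually.of_forall
      intro y
      rw [Real.norm_eq_abs, abs_mul]
      have h1 := hM (torusDist x y)
      have h2 := hFb y
      nlinarith [abs_nonneg (J (torusDist x y)), abs_nonneg (F y)]
    have := norm_integral_le_of_norm_le_const hbd
    rw [measureReal_def, L3.volume_torus_univ_toReal] at this
    simpa [Real.norm_eq_abs] using this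
  set Sσ : Torus d L → ℝ := fun x => ∫ y, J (torusDist x y) * σ y with hSσ
  set Spc : Torus d L → ℝ := fun x => ∫ y, J (torusDist x y) * pc y with hSpc
  have hgdiff : ∀ x, (∫ y, J (torusDist x y) * h y) = Sσ x - Spc x := by
    intro x
    rw [hSσ, hSpc]
    rw [← integral_sub (hIntK σ hσm 1 hσb' x) (hIntK pc hpcm 1 hpcb x)]
    congr 1; funext y; rw [hh]; ring
  have hstep1 : (∫ x, ∫ y, J (torusDist x y) * σ x * σ y) = ∫ x, σ x * Sσ x := by
    have e : ∀ x, (∫ y, J (torusDist x y) * σ x * σ y) = σ x * Sσ x := by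
      intro x
      rw [hSσ, ← MeasureTheory.integral_const_mul]
      congr 1; funext y; ring
    simp only [e]
  have hstep2 : (∫ x, ∫ y, J (torusDist x y) * pc x * pc y) = ∫ x, pc x * Spc x := by
    have e : ∀ x, (∫ y, J (torusDist x y) * pc x * pc y) = pc x * Spc x := by
      intro x
      rw [hSpc, ← MeasureTheory.integral_const_mul]
      congr 1; funext y; ring
    simp only [e]
  have hIntA : Integrable (fun x => σ x * (∫ y, J (torusDist x y) * h y)) volume := by
    apply L3.integrable_of_bound _ (hσm.mul (hSm h hhm)) C₁
    intro x
    simp only [Pi.mul_apply]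
    rw [abs_mul]
    have := hσb' x; have := hg x
    nlinarith [abs_nonneg (σ x), abs_nonneg (∫ y, J (torusDist x y) * h y)]
  have hIntB : Integrable (fun x => h x * Spc x) volume := by
    apply L3.integrable_of_bound _ (hhm.mul (hSm pc hpcm)) (2 * (M * 2 * (L:ℝ) ^ d))
    intro x
    simp only [Pi.mul_apply]
    rw [abs_mul]
    have h1 := hhb x
    have h2 : |Spc x| ≤ M * 2 * (L:ℝ) ^ d := hSb pc (fun y => le_trans (hpcb y) one_le_two) x
    nlinarith [abs_nonneg (h x), abs_nonneg (Spc x)]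
  have hIntσS : Integrable (fun x => σ x * Sσ x) volume := by
    apply L3.integrable_of_bound _ (hσm.mul (hSm σ hσm)) (M * 2 * (L:ℝ) ^ d)
    intro x
    simp only [Pi.mul_apply]
    rw [abs_mul]
    have h1 := hσb' x
    have h2 : |Sσ x| ≤ M * 2 * (L:ℝ) ^ d := hSb σ (fun y => le_trans (hσb' y) one_le_two) x
    nlinarith [abs_nonneg (σ x), abs_nonneg (Sσ x)]
  have hIntpcS : Integrable (fun x => pc x * Spc x) volume := by
    apply L3.integrable_of_bound _ (hpcm.mul (hSm pc hpcm)) (M * 2 * (L:ℝ) ^ d)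
    intro x
    simp only [Pi.mul_apply]
    rw [abs_mul]
    have h1 := hpcb x
    have h2 : |Spc x| ≤ M * 2 * (L:ℝ) ^ d := hSb pc (fun y => le_trans (hpcb y) one_le_two) x
    nlinarith [abs_nonneg (pc x), abs_nonneg (Spc x)]
  have hdecomp : (∫ x, σ x * Sσ x) - (∫ x, pc x * Spc x)
      = (∫ x, σ x * (∫ y, J (torusDist x y) * h y)) + ∫ x, h x * Spc x := by
    rw [← integral_sub hIntσS hIntpcS, ← integral_add hIntA hIntB]
    congr 1; funext x
    rw [hgdiff x]
    show σ x * Sσ x - pc x * Spc x = σ x * (Sσ x - Spc x) + (σ x - pc x) * Spc x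
    ring
  -- swap the second term
  have hswap : (∫ x, h x * Spc x) = ∫ y, pc y * (∫ x, J (torusDist y x) * h x) := by
    have e1 : ∀ x, h x * Spc x = ∫ y, J (torusDist x y) * h x * pc y := by
      intro x
      rw [hSpc, ← MeasureTheory.integral_const_mul]
      congr 1; funext y; ring
    simp only [e1]
    have hu : Integrable (Function.uncurry fun x y : Torus d L =>
        J (torusDist x y) * h x * pc y) (volume.prod volume) := by
      have hm' : Measurable (Function.uncurry fun x y : Torus d L =>
          J (torusDist x y) * h x * pc y) :=
        ((hker.measurable).mul (hhm.comp measurable_fst)).mul (hpcm.comp measurable_snd)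
      apply (integrable_const (M * 2 * 1)).mono' hm'.aestronglyMeasurable
      apply Filter.Eventually.of_forall
      rintro ⟨x, y⟩
      simp only [Function.uncurry, Real.norm_eq_abs]
      rw [abs_mul, abs_mul]
      have h1 := hM (torusDist x y)
      have h2 := hhb x
      have h3 := hpcb y
      have n1 := abs_nonneg (J (torusDist x y))
      have n2 := abs_nonneg (h x)
      have n3 := abs_nonneg (pc y)
      exact mul_le_mul (mul_le_mul h1 h2 n2 hM0) h3 n3 (by positivity)
    rw [MeasureTheory.integral_integral_swap hu]
    congr 1; funext y
    rw [← MeasureTheory.integral_const_mul]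
    congr 1; funext x
    rw [L3.torusDist_comm y x]
    ring
  -- final bounds
  have hA : |∫ x, σ x * (∫ y, J (torusDist x y) * h y)| ≤ C₁ * (L:ℝ) ^ d := by
    have hbd : ∀ᵐ x ∂(volume : Measure (Torus d L)),
        ‖σ x * (∫ y, J (torusDist x y) * h y)‖ ≤ C₁ := by
      apply Filter.Eventually.of_forall
      intro x
      rw [Real.norm_eq_abs, abs_mul]
      have := hσb' x; have := hg x
      nlinarith [abs_nonneg (σ x), abs_nonneg (∫ y, J (torusDist x y) * h y)]
    have := norm_integral_le_of_norm_le_const hbd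
    rw [measureReal_def, L3.volume_torus_univ_toReal] at this
    simpa [Real.norm_eq_abs] using this
  have hB : |∫ y, pc y * (∫ x, J (torusDist y x) * h x)| ≤ C₁ * (L:ℝ) ^ d := by
    have hbd : ∀ᵐ y ∂(volume : Measure (Torus d L)),
        ‖pc y * (∫ x, J (torusDist y x) * h x)‖ ≤ C₁ := by
      apply Filter.Eventually.of_forall
      intro y
      rw [Real.norm_eq_abs, abs_mul]
      have h1 := hpcb y
      have h2 := hg y
      nlinarith [abs_nonneg (pc y), abs_nonneg (∫ x, J (torusDist y x) * h x)]
    have := norm_integral_le_of_norm_le_const hbd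
    rw [measureReal_def, L3.volume_torus_univ_toReal] at this
    simpa [Real.norm_eq_abs] using this
  have hfinal : |(∫ x, ∫ y, J (torusDist x y) * σ x * σ y)
      - ∫ x, ∫ y, J (torusDist x y) * pc x * pc y| ≤ 2 * C₁ * (L:ℝ) ^ d := by
    rw [hstep1, hstep2, hdecomp, hswap]
    calc |(∫ x, σ x * (∫ y, J (torusDist x y) * h y))
          + ∫ y, pc y * (∫ x, J (torusDist y x) * h x)|
        ≤ |∫ x, σ x * (∫ y, J (torusDist x y) * h y)|
          + |∫ y, pc y * (∫ x, J (torusDist y x) * h x)| := abs_add_le _ _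
      _ ≤ C₁ * (L:ℝ) ^ d + C₁ * (L:ℝ) ^ d := add_le_add hA hB
      _ = 2 * C₁ * (L:ℝ) ^ d := by ring
  have hzpow : ((2:ℝ)) ^ (-(ℓ:ℤ)) = ((2:ℝ) ^ ℓ)⁻¹ := by
    rw [zpow_neg, zpow_natCast]
  calc |(∫ x, ∫ y, J (torusDist x y) * σ x * σ y)
      - ∫ x, ∫ y, J (torusDist x y) * pc x * pc y| ≤ 2 * C₁ * (L:ℝ) ^ d := hfinal
    _ = (4 * K * Real.sqrt d * 4 ^ d) * (L:ℝ) ^ d * ((2:ℝ) ^ ℓ)⁻¹ := by rw [hC₁]; ring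
    _ ≤ (4 * K * Real.sqrt d * 4 ^ d + 1) * (L:ℝ) ^ d * 2 ^ (-(ℓ:ℤ)) := by
        rw [hzpow]
        have hpos : (0:ℝ) ≤ (L:ℝ) ^ d * ((2:ℝ) ^ ℓ)⁻¹ := by positivity
        nlinarith
end

section
/- There is a constant c > 0, depending only on the dimension d, with the following property. Fix integers k > ℓ ≥ 1 and an integer L ≥ 2, set N = 2^{d(k−ℓ)}, and let φ : T_L → [−1,1] be continuously differentiable with L^{−d}∫_{T_L} φ(r) dr = −1 + 2M/(2^{dk}L^d) for some integer 0 ≤ M ≤ 2^{dk}L^d. Then there exists a function σ_* : T_L → [−1,1], constant on each cube of the partition Q^{(ℓ)} of T_L into cubes of side 2^{−ℓ} and taking values in the set {−1 + 2j/N : j = 0,…,N}, such that ∫_{T_L} σ_*(r) dr = ∫_{T_L} φ(r) dr and ‖σ_* − φ‖_∞ ≤ c · (1 + ‖∇φ‖_∞) · (2^{−ℓ} + 2^{−d(k−ℓ)}). -/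
open MeasureTheory Real

open scoped Classical

section AuxDiscretization

open Set

variable {L : ℕ} [Fact ((0:ℝ) < L)]

lemma torusCoord_mem (x : AddCircle (L:ℝ)) : torusCoord x ∈ Set.Ico (0:ℝ) L := by
  have h := ((AddCircle.equivIco (L:ℝ) 0) x).2
  exact ⟨h.1, lt_of_lt_of_eq h.2 (zero_add _)⟩

lemma coe_torusCoord (x : AddCircle (L:ℝ)) : ((torusCoord x : ℝ) : AddCircle (L:ℝ)) = x :=
  (AddCircle.equivIco (L:ℝ) 0).symm_apply_apply x

lemma torusCoord_coe {r : ℝ} (hr : r ∈ Set.Ico (0:ℝ) L) :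
    torusCoord (r : AddCircle (L:ℝ)) = r := by
  have : (AddCircle.equivIco (L:ℝ) 0) (r : AddCircle (L:ℝ)) = ⟨r, by simpa using hr⟩ := by
    rw [Equiv.apply_eq_iff_eq_symm_apply]; rfl
  simp [torusCoord, this]

lemma measurable_torusCoord : Measurable (torusCoord (L := L)) :=
  measurable_subtype_coe.comp (AddCircle.measurableEquivIco (L:ℝ) 0).measurable

lemma volume_torusCoord_Ico {a b : ℝ} (ha : 0 ≤ a) (hab : a ≤ b) (hbL : b ≤ L) :
    volume {z : AddCircle (L:ℝ) | torusCoord z ∈ Set.Ico a b} = ENNReal.ofReal (b - a) := by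
  have hmeas : MeasurableSet {z : AddCircle (L:ℝ) | torusCoord z ∈ Set.Ico a b} :=
    measurable_torusCoord measurableSet_Ico
  rw [AddCircle.add_projection_respects_measure (L:ℝ) 0 hmeas]
  set E := (QuotientAddGroup.mk ⁻¹' {z : AddCircle (L:ℝ) | torusCoord z ∈ Set.Ico a b})
      ∩ Set.Ioc 0 (0 + (L:ℝ)) with hE
  have h1 : Set.Ioo a b ⊆ E := by
    intro r hr
    refine ⟨?_, by constructor <;> [linarith [hr.1]; linarith [hr.2, hbL]]⟩
    show torusCoord ((r : ℝ) : AddCircle (L:ℝ)) ∈ Set.Ico a b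
    rw [torusCoord_coe ⟨le_trans ha hr.1.le, lt_of_lt_of_le hr.2 hbL⟩]
    exact ⟨hr.1.le, hr.2⟩
  have h2 : E ⊆ Set.Ico a b ∪ {(L:ℝ)} := by
    rintro r ⟨hr1, hr2⟩
    rw [zero_add] at hr2
    rcases eq_or_lt_of_le hr2.2 with h | h
    · exact Or.inr h
    · left
      have : torusCoord ((r : ℝ) : AddCircle (L:ℝ)) = r := torusCoord_coe ⟨hr2.1.le, h⟩
      have hr1' : torusCoord ((r : ℝ) : AddCircle (L:ℝ)) ∈ Set.Ico a b := hr1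
      rwa [this] at hr1'
  apply le_antisymm
  · calc volume E ≤ volume (Set.Ico a b ∪ {(L:ℝ)}) := measure_mono h2
      _ ≤ volume (Set.Ico a b) + volume {(L:ℝ)} := measure_union_le _ _
      _ = ENNReal.ofReal (b - a) := by simp [Real.volume_Ico, Real.volume_singleton]
  · calc ENNReal.ofReal (b - a) = volume (Set.Ioo a b) := (Real.volume_Ioo).symm
      _ ≤ volume E := measure_mono h1

end AuxDiscretization

set_option maxHeartbeats 1600000 in
/-- **Discretization with exact mass** (Lemma `lemma4`): there is a constant `c > 0`, depending
only on `d`, such that for all integers `k > ℓ ≥ 1`, `L ≥ 2`, and every continuously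
differentiable `φ : T_L → [−1,1]` with `‖∇φ‖_∞ ≤ G` and mean `−1 + 2M/(2^{dk}L^d)` for an
integer `0 ≤ M ≤ 2^{dk}L^d`, there is a coarse-grained configuration `σ_*` (constant on the
cubes of `Q^{(ℓ)}` with values in `{−1 + 2j/2^{d(k−ℓ)} : 0 ≤ j ≤ 2^{d(k−ℓ)}}`) with the same
integral as `φ` and `‖σ_* − φ‖_∞ ≤ c · (1 + G) · (2^{−ℓ} + 2^{−d(k−ℓ)})`. -/
theorem exists_coarse_discretization (d : ℕ) (hd : 1 ≤ d) :
    ∃ c : ℝ, 0 < c ∧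
      ∀ (L k ℓ : ℕ) [Fact ((0:ℝ) < L)], 2 ≤ L → 1 ≤ ℓ → ℓ < k →
      ∀ (φ : Torus d L → ℝ) (G : ℝ) (M : ℕ),
      ContDiff ℝ 1 (liftTorus φ) →
      (∀ v, ‖fderiv ℝ (liftTorus φ) v‖ ≤ G) →
      (∀ x, φ x ∈ Set.Icc (-1:ℝ) 1) →
      M ≤ 2 ^ (d * k) * L ^ d →
      ((L:ℝ) ^ (-(d:ℤ)) * ∫ r, φ r) = -1 + 2 * (M:ℝ) / (2 ^ (d * k) * (L:ℝ) ^ d) →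
      ∃ σs : Torus d L → ℝ,
        (∀ x y, cubeIdx L ℓ x = cubeIdx L ℓ y → σs x = σs y) ∧
        (∀ x, ∃ j : ℕ, j ≤ 2 ^ (d * (k - ℓ)) ∧
            σs x = -1 + 2 * (j:ℝ) / 2 ^ (d * (k - ℓ))) ∧
        (∫ r, σs r) = (∫ r, φ r) ∧
        ∀ x, |σs x - φ x| ≤
          c * (1 + G) * (2 ^ (-(ℓ:ℤ)) + 2 ^ (-((d * (k - ℓ) : ℕ) : ℤ))) := by
  refine ⟨Real.sqrt d + 2, by positivity, ?_⟩
  intro L k ℓ instL hL2 hℓ1 hℓk φ G M hφ hG hrange hM hmean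
  obtain ⟨m, rfl⟩ : ∃ m, k = ℓ + m := ⟨k - ℓ, by omega⟩
  simp only [Nat.add_sub_cancel_left]
  have hL0 : (0:ℝ) < L := Fact.out
  -- numerical constants
  set Nn : ℕ := 2 ^ (d * m) with hNndef
  set NR : ℝ := ((Nn : ℕ) : ℝ) with hNRdef
  have hNRpow : NR = (2:ℝ) ^ (d * m) := by rw [hNRdef, hNndef]; push_cast; ring
  have hNR : (0:ℝ) < NR := by rw [hNRpow]; positivity
  set K : ℝ := (2:ℝ) ^ (d * (ℓ + m)) with hKdef
  have hK : (0:ℝ) < K := by rw [hKdef]; positivity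
  set V : ℝ := (1 / (2:ℝ) ^ ℓ) ^ d with hVdef
  have hV : (0:ℝ) < V := by rw [hVdef]; positivity
  have hq : (0:ℝ) < (2:ℝ) ^ ℓ := by positivity
  have hKV : K * V = NR := by
    rw [hKdef, hVdef, hNRpow, div_pow, one_pow, ← pow_mul, mul_one_div,
      div_eq_iff (by positivity : ((2:ℝ) ^ (ℓ * d)) ≠ 0), ← pow_add]
    congr 1; ring
  have hG0 : 0 ≤ G := le_trans (norm_nonneg _) (hG 0)
  -- floors of rescaled coordinates
  have hflo : ∀ z : AddCircle (L:ℝ), 0 ≤ ⌊torusCoord z * (2:ℝ) ^ ℓ⌋ := fun z =>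
    Int.floor_nonneg.2 (mul_nonneg (torusCoord_mem z).1 hq.le)
  have hfhi : ∀ z : AddCircle (L:ℝ), ⌊torusCoord z * (2:ℝ) ^ ℓ⌋ < ((2 ^ ℓ * L : ℕ) : ℤ) := by
    intro z
    rw [Int.floor_lt]
    have h2 := (torusCoord_mem z).2
    push_cast
    calc torusCoord z * (2:ℝ) ^ ℓ < (L:ℝ) * (2:ℝ) ^ ℓ := mul_lt_mul_of_pos_right h2 hq
      _ = (2:ℝ) ^ ℓ * L := by ring
  have hbnd : ∀ z : AddCircle (L:ℝ), (⌊torusCoord z * (2:ℝ) ^ ℓ⌋).toNat < 2 ^ ℓ * L := by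
    intro z; have h1 := hflo z; have h2 := hfhi z; omega
  set n2 : ℕ := 2 ^ ℓ * L with hn2def
  -- the labelled partition
  set P : Torus d L → (Fin d → Fin n2) :=
    fun x i => ⟨(⌊torusCoord (x i) * (2:ℝ) ^ ℓ⌋).toNat, hbnd (x i)⟩ with hPdef
  have hPidx : ∀ (x : Torus d L) i, cubeIdx L ℓ x i = ((P x i : ℕ) : ℤ) := by
    intro x i
    rw [hPdef]
    show ⌊torusCoord (x i) * (2:ℝ) ^ ℓ⌋ = _
    rw [Int.toNat_of_nonneg (hflo (x i))]
  set C : Fin n2 → Set (AddCircle (L:ℝ)) :=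
    fun a => {z | torusCoord z ∈ Set.Ico ((a : ℝ) / 2 ^ ℓ) (((a : ℝ) + 1) / 2 ^ ℓ)} with hCdef
  have hCmeas : ∀ a, MeasurableSet (C a) := fun a => measurable_torusCoord measurableSet_Ico
  have hCvol : ∀ a, volume (C a) = ENNReal.ofReal (1 / 2 ^ ℓ) := by
    intro a
    rw [hCdef]
    have hab : (a:ℝ) / 2 ^ ℓ ≤ ((a:ℝ) + 1) / 2 ^ ℓ := by gcongr; linarith
    have haL : ((a:ℝ) + 1) / 2 ^ ℓ ≤ L := by
      rw [div_le_iff₀ hq]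
      have := a.isLt
      have : ((a:ℕ):ℝ) + 1 ≤ ((2 ^ ℓ * L : ℕ) : ℝ) := by exact_mod_cast this
      push_cast at this
      nlinarith
    rw [volume_torusCoord_Ico (by positivity) hab haL]
    congr 1; ring
  have hPC : ∀ (x : Torus d L) (i : Fin d) (a : Fin n2), P x i = a ↔ (x i) ∈ C a := by
    intro x i a
    have h0 := hflo (x i)
    rw [hPdef, hCdef, Fin.ext_iff]
    simp only [Set.mem_setOf_eq, Set.mem_Ico]
    have hiff : ((⌊torusCoord (x i) * (2:ℝ) ^ ℓ⌋).toNat = (a:ℕ)) ↔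
        ⌊torusCoord (x i) * (2:ℝ) ^ ℓ⌋ = ((a:ℕ):ℤ) := by omega
    rw [hiff, Int.floor_eq_iff]
    constructor
    · rintro ⟨h1, h2⟩
      constructor
      · rw [div_le_iff₀ hq]; exact_mod_cast h1
      · rw [lt_div_iff₀ hq]; push_cast at h2 ⊢; linarith
    · rintro ⟨h1, h2⟩
      rw [div_le_iff₀ hq] at h1
      rw [lt_div_iff₀ hq] at h2
      constructor
      · exact_mod_cast h1
      · push_cast; linarith
  set B : (Fin d → Fin n2) → Set (Torus d L) := fun b => P ⁻¹' {b} with hBdef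
  have hxB : ∀ x, x ∈ B (P x) := fun x => rfl
  have hmemB : ∀ (x : Torus d L) b, x ∈ B b ↔ ∀ i, (x i) ∈ C (b i) := by
    intro x b
    rw [hBdef, Set.mem_preimage, Set.mem_singleton_iff, funext_iff]
    exact forall_congr' fun i => hPC x i (b i)
  have hBpi : ∀ b, B b = Set.pi Set.univ (fun i => C (b i)) := by
    intro b; ext x; rw [Set.mem_univ_pi]; exact hmemB x b
  have hBmeas : ∀ b, MeasurableSet (B b) := by
    intro b; rw [hBpi]; exact MeasurableSet.univ_pi fun i => hCmeas (b i)
  have hBvol : ∀ b, volume (B b) = ENNReal.ofReal V := by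
    intro b
    rw [hBpi, MeasureTheory.volume_pi_pi]
    simp only [hCvol]
    rw [Finset.prod_const, Finset.card_univ, Fintype.card_fin,
      ← ENNReal.ofReal_pow (by positivity), hVdef]
  have hBvolR : ∀ b, (volume (B b)).toReal = V := fun b => by
    rw [hBvol b, ENNReal.toReal_ofReal hV.le]
  have hBfin : ∀ b, volume (B b) < ⊤ := fun b => by
    rw [hBvol b]; exact ENNReal.ofReal_lt_top
  have hdisj : Pairwise (Function.onFun Disjoint B) := by
    intro b b' hne
    rw [Function.onFun, Set.disjoint_left]
    intro x hx hx'
    rw [hBdef, Set.mem_preimage, Set.mem_singleton_iff] at hx hx'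
    exact hne (hx ▸ hx')
  have hcover : (⋃ b, B b) = Set.univ := by
    ext x
    simp only [Set.mem_iUnion, Set.mem_univ, iff_true]
    exact ⟨P x, hxB x⟩
  -- measurability and integrability of φ
  have hφx : ∀ x : Torus d L, φ x = liftTorus φ (WithLp.toLp 2 (fun i => torusCoord (x i))) := by
    intro x
    show φ x = φ (fun i => ((torusCoord (x i) : ℝ) : AddCircle (L:ℝ)))
    congr 1; funext i; exact (coe_torusCoord (x i)).symm
  have hφmeas : Measurable φ := by
    have hcont : Continuous (liftTorus φ) := hφ.continuous
    have hrepr : φ = fun x => liftTorus φ (WithLp.toLp 2 (fun i => torusCoord (x i))) := funext hφx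
    rw [hrepr]
    exact hcont.measurable.comp ((PiLp.continuous_toLp 2 _).measurable.comp
      (measurable_pi_lambda _ fun i => measurable_torusCoord.comp (measurable_pi_apply i)))
  have hφint : MeasureTheory.Integrable φ := by
    apply MeasureTheory.Integrable.mono' (integrable_const (1:ℝ)) hφmeas.aestronglyMeasurable
    filter_upwards with x
    rw [Real.norm_eq_abs, abs_le]
    exact ⟨(hrange x).1, (hrange x).2⟩
  -- decomposition of integrals
  have hsum : ∀ f : Torus d L → ℝ, MeasureTheory.Integrable f →
      ∫ x, f x = ∑ b, ∫ x in B b, f x := by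
    intro f hf
    rw [← MeasureTheory.setIntegral_univ, ← hcover,
      MeasureTheory.integral_iUnion hBmeas hdisj hf.integrableOn]
    exact tsum_fintype _
  set A : (Fin d → Fin n2) → ℝ := fun b => ∫ x in B b, φ x with hAdef
  have hA : ∀ b, |A b| ≤ V := by
    intro b
    rw [← Real.norm_eq_abs]
    have h := MeasureTheory.norm_setIntegral_le_of_norm_le_const (hBfin b)
      (f := φ) (C := 1)
      (fun x _ => by rw [Real.norm_eq_abs, abs_le]; exact ⟨(hrange x).1, (hrange x).2⟩)
    rw [one_mul, measureReal_def, hBvolR b] at h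
    exact h
  -- the Lipschitz estimate within a cube
  have hLip : ∀ (b) (x y : Torus d L), x ∈ B b → y ∈ B b →
      |φ y - φ x| ≤ G * (Real.sqrt d * (1 / 2 ^ ℓ)) := by
    intro b x y hx hy
    set u : EuclideanSpace ℝ (Fin d) := WithLp.toLp 2 (fun i => torusCoord (x i)) with hu
    set w : EuclideanSpace ℝ (Fin d) := WithLp.toLp 2 (fun i => torusCoord (y i)) with hw
    have key : ‖liftTorus φ w - liftTorus φ u‖ ≤ G * ‖w - u‖ :=
      convex_univ.norm_image_sub_le_of_norm_fderiv_le
        (fun v _ => (hφ.differentiable one_ne_zero).differentiableAt)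
        (fun v _ => hG v) (Set.mem_univ u) (Set.mem_univ w)
    have h1 : |φ y - φ x| ≤ G * ‖w - u‖ := by
      rw [hφx x, hφx y, ← Real.norm_eq_abs]
      exact key
    have h2 : ‖w - u‖ ≤ Real.sqrt d * (1 / 2 ^ ℓ) := by
      rw [EuclideanSpace.norm_eq]
      have hcoord : ∀ i, ‖(w - u) i‖ ^ 2 ≤ ((1:ℝ) / 2 ^ ℓ) ^ 2 := by
        intro i
        have hxi := (hmemB x b).1 hx i
        have hyi := (hmemB y b).1 hy i
        rw [hCdef] at hxi hyi
        simp only [Set.mem_setOf_eq, Set.mem_Ico] at hxi hyi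
        have hsplit : (((b i : ℕ) : ℝ) + 1) / 2 ^ ℓ = ((b i : ℕ) : ℝ) / 2 ^ ℓ + 1 / 2 ^ ℓ := by
          ring
        have hdiff : (w - u) i = torusCoord (y i) - torusCoord (x i) := rfl
        rw [hdiff, Real.norm_eq_abs, sq_abs]
        apply sq_le_sq'
        · rw [hsplit] at hxi; linarith [hxi.2, hyi.1]
        · rw [hsplit] at hyi; linarith [hyi.2, hxi.1]
      calc Real.sqrt (∑ i, ‖(w - u) i‖ ^ 2)
          ≤ Real.sqrt (∑ _i : Fin d, ((1:ℝ) / 2 ^ ℓ) ^ 2) :=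
            Real.sqrt_le_sqrt (Finset.sum_le_sum fun i _ => hcoord i)
        _ = Real.sqrt ((d : ℝ) * ((1:ℝ) / 2 ^ ℓ) ^ 2) := by
            rw [Finset.sum_const, Finset.card_univ, Fintype.card_fin, nsmul_eq_mul]
        _ = Real.sqrt d * (1 / 2 ^ ℓ) := by
            rw [Real.sqrt_mul (by positivity), Real.sqrt_sq (by positivity)]
    calc |φ y - φ x| ≤ G * ‖w - u‖ := h1
      _ ≤ G * (Real.sqrt d * (1 / 2 ^ ℓ)) := mul_le_mul_of_nonneg_left h2 hG0
  have hAvg : ∀ (b) (x : Torus d L), x ∈ B b →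
      |A b - V * φ x| ≤ G * (Real.sqrt d * (1 / 2 ^ ℓ)) * V := by
    intro b x hx
    have hsub : A b - V * φ x = ∫ y in B b, (φ y - φ x) := by
      rw [MeasureTheory.integral_sub hφint.integrableOn
        (MeasureTheory.integrableOn_const (hBfin b).ne),
        MeasureTheory.setIntegral_const, measureReal_def, hBvolR b, smul_eq_mul]
    rw [hsub, ← Real.norm_eq_abs]
    have h := MeasureTheory.norm_setIntegral_le_of_norm_le_const (hBfin b)
      (C := G * (Real.sqrt d * (1 / 2 ^ ℓ)))
      (fun y hy => by rw [Real.norm_eq_abs]; exact hLip b x y hx hy)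
    rwa [measureReal_def, hBvolR b] at h
  -- the value of the total integral of φ
  have hIphi : ∫ x, φ x = -((L:ℝ) ^ d) + 2 * M / K := by
    have hzp : (L:ℝ) ^ (-(d:ℤ)) = ((L:ℝ) ^ d)⁻¹ := by rw [zpow_neg, zpow_natCast]
    rw [hzp] at hmean
    have h1 : ∫ x, φ x = (L:ℝ) ^ d * (-1 + 2 * M / (K * (L:ℝ) ^ d)) := by
      rw [← hmean]
      field_simp
    rw [h1]
    field_simp
  -- the combinatorial rounding
  obtain ⟨n, ⟨e⟩⟩ : ∃ n : ℕ, Nonempty ((Fin d → Fin n2) ≃ Fin n) :=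
    ⟨Fintype.card (Fin d → Fin n2), ⟨Fintype.equivFin _⟩⟩
  have hcardn : Fintype.card (Fin d → Fin n2) = n := by
    rw [Fintype.card_congr e, Fintype.card_fin]
  have hcard : (n : ℝ) * V = (L:ℝ) ^ d := by
    rw [← hcardn, Fintype.card_fun, Fintype.card_fin, Fintype.card_fin, hVdef, hn2def]
    push_cast
    rw [← mul_pow]
    congr 1
    field_simp
  set t : ℕ → ℝ := fun i => if h : i < n then (K * A (e.symm ⟨i, h⟩) + NR) / 2 else 0
    with htdef
  have ht : ∀ i : Fin n, t i = (K * A (e.symm i) + NR) / 2 := by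
    intro i
    rw [htdef]
    simp only [i.isLt, dif_pos, Fin.eta]
  have ht01 : ∀ i : Fin n, 0 ≤ t i ∧ t i ≤ NR := by
    intro i
    rw [ht i]
    have h2 := abs_le.1 (hA (e.symm i))
    constructor
    · nlinarith [hKV, hK, hV]
    · nlinarith [hKV, hK, hV]
  set S : ℕ → ℝ := fun m' => ∑ i ∈ Finset.range m', t i with hSdef
  have hSsucc : ∀ i, S (i + 1) = S i + t i := fun i => Finset.sum_range_succ t i
  have hS0 : S 0 = 0 := Finset.sum_range_zero _
  have hAsum : ∑ b, A b = ∫ x, φ x := (hsum φ hφint).symm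
  have hnNR : (n : ℝ) * NR = K * (L:ℝ) ^ d := by
    rw [← hKV, ← hcard]; ring
  have hSn : S n = M := by
    rw [hSdef]
    calc ∑ i ∈ Finset.range n, t i = ∑ i : Fin n, t i := (Fin.sum_univ_eq_sum_range t n).symm
      _ = ∑ i : Fin n, (K * A (e.symm i) + NR) / 2 := Finset.sum_congr rfl fun i _ => ht i
      _ = ∑ b, (K * A b + NR) / 2 := Equiv.sum_comp e.symm (fun b => (K * A b + NR) / 2)
      _ = (K * (∑ b, A b) + n * NR) / 2 := by
          rw [← Finset.sum_div, Finset.sum_add_distrib, ← Finset.mul_sum, Finset.sum_const,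
            Finset.card_univ, hcardn, nsmul_eq_mul]
      _ = M := by
          rw [hAsum, hIphi, hnNR]
          field_simp
          ring
  set jf : ℕ → ℤ := fun i => ⌊S (i + 1)⌋ - ⌊S i⌋ with hjdef
  have hjeq : ∀ i, jf i = ⌊S (i + 1)⌋ - ⌊S i⌋ := fun i => rfl
  have hjsum : ∑ i ∈ Finset.range n, jf i = (M : ℤ) := by
    have hts : ∑ i ∈ Finset.range n, jf i = ⌊S n⌋ - ⌊S 0⌋ := by
      rw [hjdef]
      exact Finset.sum_range_sub (fun i => ⌊S i⌋) n
    rw [hts, hSn, hS0]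
    simp
  clear_value jf
  clear_value S
  clear_value t
  clear hjdef
  have hj0 : ∀ i : Fin n, 0 ≤ jf (i : ℕ) := by
    intro i
    have hmono : ⌊S (i : ℕ)⌋ ≤ ⌊S ((i : ℕ) + 1)⌋ :=
      Int.floor_le_floor (by rw [hSsucc i]; linarith [(ht01 i).1])
    rw [hjeq]
    omega
  have hjN : ∀ i : Fin n, jf (i : ℕ) ≤ (Nn : ℤ) := by
    intro i
    have h1 : ⌊S ((i : ℕ) + 1)⌋ ≤ ⌊S (i : ℕ)⌋ + (Nn : ℤ) := by
      rw [hSsucc i]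
      calc ⌊S (i : ℕ) + t (i : ℕ)⌋ ≤ ⌊S (i : ℕ) + NR⌋ :=
            Int.floor_le_floor (by linarith [(ht01 i).2])
        _ = ⌊S (i : ℕ)⌋ + (Nn : ℤ) := by
            rw [hNRdef]
            exact_mod_cast Int.floor_add_natCast (S (i : ℕ)) Nn
    rw [hjeq]
    omega
  have hjt : ∀ i : Fin n, |(jf (i : ℕ) : ℝ) - t (i : ℕ)| ≤ 1 := by
    intro i
    have h1 : ((⌊S (i : ℕ)⌋ : ℝ)) ≤ S (i : ℕ) := Int.floor_le _
    have h2 : S (i : ℕ) - 1 < ⌊S (i : ℕ)⌋ := Int.sub_one_lt_floor _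
    have h3 : ((⌊S ((i : ℕ) + 1)⌋ : ℝ)) ≤ S ((i : ℕ) + 1) := Int.floor_le _
    have h4 : S ((i : ℕ) + 1) - 1 < ⌊S ((i : ℕ) + 1)⌋ := Int.sub_one_lt_floor _
    have hs := hSsucc (i : ℕ)
    rw [hjeq]
    push_cast
    rw [abs_le]
    constructor <;> linarith
  -- the coarse-grained configuration
  refine ⟨fun x => -1 + 2 * ((jf (e (P x)) : ℤ) : ℝ) / NR, ?_, ?_, ?_, ?_⟩
  · -- constant on cubes
    intro x y h
    beta_reduce
    have hPxy : P x = P y := by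
      funext i
      apply Fin.ext
      have h1 := hPidx x i
      have h2 := hPidx y i
      have h3 := congrFun h i
      rw [h1, h2] at h3
      exact_mod_cast h3
    rw [hPxy]
  · -- values in the grid
    intro x
    beta_reduce
    refine ⟨(jf (e (P x))).toNat, ?_, ?_⟩
    · have h1 := hj0 (e (P x))
      have h2 := hjN (e (P x))
      omega
    · have h0 := hj0 (e (P x))
      have hcast : (((jf (e (P x))).toNat : ℕ) : ℝ) = ((jf (e (P x)) : ℤ) : ℝ) := by
        exact_mod_cast congrArg (fun z : ℤ => (z : ℝ)) (Int.toNat_of_nonneg h0)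
      rw [← hNRpow, hcast]
  · -- equal integrals
    beta_reduce
    have hσbnd : ∀ x : Torus d L, |(-1 + 2 * ((jf (e (P x)) : ℤ) : ℝ) / NR)| ≤ 1 := by
      intro x
      have h0 : (0:ℝ) ≤ ((jf (e (P x)) : ℤ) : ℝ) := by exact_mod_cast hj0 (e (P x))
      have hN' : ((jf (e (P x)) : ℤ) : ℝ) ≤ NR := by
        rw [hNRdef]; exact_mod_cast hjN (e (P x))
      rw [abs_le]
      constructor
      · have : (0:ℝ) ≤ 2 * ((jf (e (P x)) : ℤ) : ℝ) / NR := by positivity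
        linarith
      · have : 2 * ((jf (e (P x)) : ℤ) : ℝ) / NR ≤ 2 := by
          rw [div_le_iff₀ hNR]; linarith
        linarith
    have hσmeas : Measurable (fun x : Torus d L => -1 + 2 * ((jf (e (P x)) : ℤ) : ℝ) / NR) := by
      have hrep : (fun x : Torus d L => -1 + 2 * ((jf (e (P x)) : ℤ) : ℝ) / NR)
          = fun x => ∑ b, (B b).indicator
              (fun _ => -1 + 2 * ((jf (e b) : ℤ) : ℝ) / NR) x := by
        funext x
        rw [Finset.sum_eq_single (P x)]
        · rw [Set.indicator_of_mem (hxB x)]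
        · intro b _ hbne
          apply Set.indicator_of_notMem
          intro hmem
          rw [hBdef, Set.mem_preimage, Set.mem_singleton_iff] at hmem
          exact hbne hmem.symm
        · intro habs
          exact absurd (Finset.mem_univ _) habs
      rw [hrep]
      exact Finset.measurable_sum _ fun b _ => measurable_const.indicator (hBmeas b)
    have hσint : MeasureTheory.Integrable
        (fun x : Torus d L => -1 + 2 * ((jf (e (P x)) : ℤ) : ℝ) / NR) := by
      apply MeasureTheory.Integrable.mono' (integrable_const (1:ℝ))
        hσmeas.aestronglyMeasurable
      filter_upwards with x
      rw [Real.norm_eq_abs]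
      exact hσbnd x
    rw [hsum _ hσint]
    have hconst : ∀ b, (∫ x in B b, (-1 + 2 * ((jf (e (P x)) : ℤ) : ℝ) / NR))
        = (-1 + 2 * ((jf (e b) : ℤ) : ℝ) / NR) * V := by
      intro b
      rw [MeasureTheory.setIntegral_congr_fun (hBmeas b)
        (g := fun _ => -1 + 2 * ((jf (e b) : ℤ) : ℝ) / NR) ?_]
      · rw [MeasureTheory.setIntegral_const, measureReal_def, hBvolR b, smul_eq_mul, mul_comm]
      · intro x hx
        rw [hBdef, Set.mem_preimage, Set.mem_singleton_iff] at hx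
        simp only [hx]
    simp only [hconst]
    have hjsumR : ∑ b, ((jf (e b) : ℤ) : ℝ) = (M : ℝ) := by
      have h1 : ∑ b, jf (e b) = (M : ℤ) := by
        rw [Equiv.sum_comp e (fun i : Fin n => jf (i : ℕ)), Fin.sum_univ_eq_sum_range]
        exact hjsum
      calc ∑ b, ((jf (e b) : ℤ) : ℝ) = (((∑ b, jf (e b) : ℤ)) : ℝ) := by push_cast; ring
        _ = (M : ℝ) := by rw [h1]; simp
    have hexp : ∑ b, (-1 + 2 * ((jf (e b) : ℤ) : ℝ) / NR) * V
        = (-(n : ℝ) + 2 * M / NR) * V := by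
      rw [← Finset.sum_mul]
      congr 1
      rw [Finset.sum_add_distrib, Finset.sum_const, Finset.card_univ, nsmul_eq_mul]
      simp only [mul_neg, mul_one]
      rw [← Finset.sum_div, ← Finset.mul_sum, hjsumR, hcardn]
    rw [hexp, hIphi]
    have h2MV : 2 * (M:ℝ) / NR * V = 2 * M / K := by
      rw [div_mul_eq_mul_div, div_eq_div_iff hNR.ne' hK.ne']
      linear_combination (2 * (M:ℝ)) * hKV
    calc (-(n : ℝ) + 2 * M / NR) * V = -((n:ℝ) * V) + 2 * M / NR * V := by ring
      _ = -((L:ℝ) ^ d) + 2 * M / K := by rw [hcard, h2MV]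
  · -- the uniform bound
    intro x
    beta_reduce
    have hx : x ∈ B (P x) := hxB x
    set b := P x with hbdef
    set i : Fin n := e b with hidef
    have htv : t (i : ℕ) = (K * A b + NR) / 2 := by
      rw [ht i, hidef, Equiv.symm_apply_apply]
    have h1 : |(-1 + 2 * ((jf (i : ℕ) : ℤ) : ℝ) / NR) - A b / V| ≤ 2 / NR := by
      have hAKA : A b / V = K * A b / NR := by
        rw [div_eq_div_iff hV.ne' hNR.ne', ← hKV]
        ring
      have heq : (-1 + 2 * ((jf (i : ℕ) : ℤ) : ℝ) / NR) - A b / V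
          = 2 * (((jf (i : ℕ) : ℤ) : ℝ) - t (i : ℕ)) / NR := by
        rw [hAKA, htv]
        field_simp
        ring
      rw [heq, abs_div, abs_of_pos hNR, div_le_div_iff₀ hNR hNR]
      have := hjt i
      have habs : |2 * (((jf (i : ℕ) : ℤ) : ℝ) - t (i : ℕ))| ≤ 2 := by
        rw [abs_mul]
        rw [show |(2:ℝ)| = 2 from abs_of_pos two_pos]
        linarith
      nlinarith [hNR]
    have h2 : |A b / V - φ x| ≤ G * (Real.sqrt d * (1 / 2 ^ ℓ)) := by
      have heq : A b / V - φ x = (A b - V * φ x) / V := by field_simp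
      rw [heq, abs_div, abs_of_pos hV, div_le_iff₀ hV]
      exact hAvg b x hx
    have hz1 : (2:ℝ) ^ (-(ℓ:ℤ)) = 1 / 2 ^ ℓ := by
      rw [zpow_neg, zpow_natCast, one_div]
    have hz2 : (2:ℝ) ^ (-((d * m : ℕ) : ℤ)) = 1 / NR := by
      rw [zpow_neg, zpow_natCast, hNRpow, one_div]
    calc |(-1 + 2 * ((jf (i : ℕ) : ℤ) : ℝ) / NR) - φ x|
        ≤ |(-1 + 2 * ((jf (i : ℕ) : ℤ) : ℝ) / NR) - A b / V| + |A b / V - φ x| :=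
          abs_sub_le _ _ _
      _ ≤ 2 / NR + G * (Real.sqrt d * (1 / 2 ^ ℓ)) := add_le_add h1 h2
      _ ≤ (Real.sqrt d + 2) * (1 + G) * ((2:ℝ) ^ (-(ℓ:ℤ)) + (2:ℝ) ^ (-((d * m : ℕ) : ℤ))) := by
          rw [hz1, hz2]
          have ha : (0:ℝ) < 1 / 2 ^ ℓ := by positivity
          have hb : (0:ℝ) < 1 / NR := by positivity
          have hsd : (0:ℝ) ≤ Real.sqrt d := Real.sqrt_nonneg _
          have h2NR : 2 / NR = 2 * (1 / NR) := by ring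
          rw [h2NR]
          nlinarith [mul_nonneg hsd ha.le, mul_nonneg hsd hb.le,
            mul_nonneg hG0 ha.le, mul_nonneg hG0 hb.le,
            mul_nonneg (mul_nonneg hG0 hsd) ha.le, mul_nonneg (mul_nonneg hG0 hsd) hb.le]
end

section
/- Let d ≥ 2 be an integer, let H > 0, and define φ : [0,1] → ℝ by φ(η) = η^{(d−1)/d} + H(1−η)². Suppose η_c ∈ [0,1] is the unique global minimizer of φ on [0,1]. Then there exists M > 0 such that φ(η) − φ(η_c) ≥ (η − η_c)²/M for all η ∈ [0,1]. -/
/-!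
A continuous function on a compact set exceeds its strict minimum by a definite amount away from
the minimiser, so quadratic growth only has to be checked near `η_c`. Write `α = (d - 1) / d`.
If `η_c = 0`, the term `η ^ α` beats the linear decrease of `H (1 - η) ^ 2`. The case `η_c = 1`
cannot occur, since `φ'(1) = α > 0`. At an interior minimiser `φ'(η_c) = 0`, and
`φ'' = 2H - α (1 - α) η ^ (α - 2)` is increasing, so `φ''(η_c) ≤ 0` would make `φ` concave on
`[η_c / 2, η_c]` and force `φ(η_c / 2) ≤ φ(η_c)`. Hence `φ''(η_c) > 0`, which gives quadratic
growth near `η_c`.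
-/

open Real Set Filter Topology

theorem ConvexOn.isMinOn_of_hasDerivAt_eq_zero {s : Set ℝ} {g : ℝ → ℝ} {x₀ : ℝ}
    (hg : ConvexOn ℝ s g) (hx₀ : x₀ ∈ s) (hd : HasDerivAt g 0 x₀) : IsMinOn g s x₀ := by
  refine isMinOn_iff.2 fun x hx => ?_
  rcases lt_trichotomy x x₀ with hlt | rfl | hgt
  · have := hg.slope_le_of_hasDerivAt hx hx₀ hlt hd
    rw [slope_def_field, div_le_iff₀ (sub_pos.2 hlt), zero_mul] at this
    linarith
  · exact le_rfl
  · have := hg.le_slope_of_hasDerivAt hx₀ hx hgt hd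
    rw [slope_def_field, le_div_iff₀ (sub_pos.2 hgt), zero_mul] at this
    linarith

theorem Convex.quadratic_growth_of_hasDerivAt2_ge {s : Set ℝ} (hs : Convex ℝ s)
    {f f' f'' : ℝ → ℝ} (hf : ∀ x ∈ s, HasDerivAt f (f' x) x)
    (hf' : ∀ x ∈ s, HasDerivAt f' (f'' x) x) {x₀ : ℝ} (hx₀ : x₀ ∈ s) (hcrit : f' x₀ = 0)
    {κ : ℝ} (hκ : ∀ x ∈ s, κ ≤ f'' x) {x : ℝ} (hx : x ∈ s) :
    κ / 2 * (x - x₀) ^ 2 ≤ f x - f x₀ := by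
  set g : ℝ → ℝ := fun x => f x - κ / 2 * (x - x₀) ^ 2
  have hg' : ∀ x ∈ s, HasDerivAt g (f' x - κ * (x - x₀)) x := fun x hx =>
    ((hf x hx).sub ((((hasDerivAt_id' x).sub_const x₀).pow 2).const_mul (κ / 2))).congr_deriv
      (by push_cast; ring)
  have hg'' : ∀ x ∈ s, HasDerivAt (fun x => f' x - κ * (x - x₀)) (f'' x - κ) x := fun x hx =>
    ((hf' x hx).sub (((hasDerivAt_id' x).sub_const x₀).const_mul κ)).congr_deriv (by ring)
  have hconv : ConvexOn ℝ s g :=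
    convexOn_of_hasDerivWithinAt2_nonneg hs
      (fun x hx => (hg' x hx).continuousAt.continuousWithinAt)
      (fun x hx => (hg' x (interior_subset hx)).hasDerivWithinAt)
      (fun x hx => (hg'' x (interior_subset hx)).hasDerivWithinAt)
      (fun x hx => sub_nonneg.2 (hκ x (interior_subset hx)))
  have hmin : f x₀ ≤ f x - κ / 2 * (x - x₀) ^ 2 := by
    simpa [g] using hconv.isMinOn_of_hasDerivAt_eq_zero hx₀ (by simpa [hcrit] using hg' x₀ hx₀) hx
  linarith

theorem IsCompact.exists_quadratic_growth {X : Type*} [PseudoMetricSpace X] {s : Set X}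
    (hs : IsCompact s) {f : X → ℝ} (hf : ContinuousOn f s) {x₀ : X}
    (hmin : ∀ x ∈ s, x ≠ x₀ → f x₀ < f x) {c : ℝ} (hc : 0 < c)
    (hloc : ∀ᶠ x in 𝓝[s \ {x₀}] x₀, c * dist x x₀ ^ 2 ≤ f x - f x₀) :
    ∃ c' > 0, ∀ x ∈ s, c' * dist x x₀ ^ 2 ≤ f x - f x₀ := by
  obtain ⟨ε, hε, hball⟩ := Metric.eventually_nhds_iff.1 (eventually_nhdsWithin_iff.1 hloc)
  set K := s ∩ {x | ε ≤ dist x x₀}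
  have hdist : ∀ x ∈ K, 0 < dist x x₀ := fun x hx => hε.trans_le hx.2
  -- Away from `x₀` the ratio `(f x - f x₀) / dist x x₀ ^ 2` is continuous and positive.
  obtain ⟨c₁, hc₁, hK⟩ := (hs.inter_right (isClosed_le continuous_const
      (continuous_id.dist continuous_const))).exists_forall_le'
    (((hf.mono inter_subset_left).sub continuousOn_const).div
      ((continuous_id.dist continuous_const).continuousOn.pow 2)
      fun x hx => (pow_pos (hdist x hx) 2).ne')
    (f := fun x => (f x - f x₀) / dist x x₀ ^ 2) (a := 0) fun x hx => div_pos
      (sub_pos.2 (hmin x hx.1 fun h => (hdist x hx).ne' (h ▸ dist_self x)))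
      (pow_pos (hdist x hx) 2)
  refine ⟨min c c₁, lt_min hc hc₁, fun x hx => ?_⟩
  rcases lt_or_ge (dist x x₀) ε with hlt | hge
  · rcases eq_or_ne x x₀ with rfl | hne
    · simp
    · exact (mul_le_mul_of_nonneg_right (min_le_left _ _) (sq_nonneg _)).trans
        (hball hlt ⟨hx, hne⟩)
  · have hratio := hK x ⟨hx, hge⟩
    rw [le_div_iff₀ (pow_pos (hdist x ⟨hx, hge⟩) 2)] at hratio
    exact (mul_le_mul_of_nonneg_right (min_le_right _ _) (sq_nonneg _)).trans hratio

namespace Droplet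

noncomputable def energy (α H η : ℝ) : ℝ := η ^ α + H * (1 - η) ^ 2

noncomputable def energyDeriv (α H η : ℝ) : ℝ := α * η ^ (α - 1) - 2 * H * (1 - η)

noncomputable def energyDeriv2 (α H η : ℝ) : ℝ := 2 * H - α * (1 - α) * η ^ (α - 2)

variable {α H : ℝ}

theorem continuous_energy (hα : 0 ≤ α) : Continuous (energy α H) :=
  (continuous_rpow_const hα).add (continuous_const.mul ((continuous_const.sub continuous_id).pow 2))

theorem hasDerivAt_energy {x : ℝ} (hx : 0 < x) :
    HasDerivAt (energy α H) (energyDeriv α H x) x :=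
  ((hasDerivAt_rpow_const (Or.inl hx.ne')).add
    ((((hasDerivAt_id' x).const_sub 1).pow 2).const_mul H)).congr_deriv
    (by simp only [energyDeriv]; push_cast; ring)

theorem hasDerivAt_energyDeriv {x : ℝ} (hx : 0 < x) :
    HasDerivAt (energyDeriv α H) (energyDeriv2 α H x) x :=
  (((hasDerivAt_rpow_const (Or.inl hx.ne')).const_mul α).sub
    (((hasDerivAt_id' x).const_sub 1).const_mul (2 * H))).congr_deriv
    (by simp only [energyDeriv2]; ring_nf)

theorem monotoneOn_energyDeriv2 (hα0 : 0 ≤ α) (hα1 : α ≤ 1) :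
    MonotoneOn (energyDeriv2 α H) (Ioi 0) := fun x hx y _ hxy =>
  sub_le_sub_left (mul_le_mul_of_nonneg_left
    (rpow_le_rpow_of_nonpos hx hxy (by linarith)) (mul_nonneg hα0 (sub_nonneg.2 hα1))) _

theorem eventually_quadratic_growth_energy_zero (hα0 : 0 < α) (hα1 : α < 1) :
    ∀ᶠ η in 𝓝[>] 0, H * η ^ 2 ≤ energy α H η - energy α H 0 := by
  filter_upwards [self_mem_nhdsWithin,
    (tendsto_rpow_neg_nhdsGT_zero (sub_neg.2 hα1)).eventually_ge_atTop (2 * H)]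
    with η (hη : 0 < η) hpow
  have hsplit : η ^ α = η ^ (α - 1) * η := by rw [← rpow_add_one hη.ne']; ring_nf
  simp only [energy, zero_rpow hα0.ne']
  nlinarith

-- Bernoulli gives `φ(1 - t) - φ(1) ≤ t (H t - α)`, negative for `t = α / (α + H)`.
theorem energy_lt_energy_one (hα0 : 0 < α) (hα1 : α ≤ 1) (hH : 0 < H) :
    energy α H (H / (α + H)) < energy α H 1 := by
  have hsum : 0 < α + H := by positivity
  have ht : α / (α + H) < 1 := (div_lt_one hsum).2 (by linarith)
  have hHt : H * (α / (α + H)) < α := by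
    rw [mul_div_assoc', div_lt_iff₀ hsum]
    nlinarith
  have hη : H / (α + H) = 1 + -(α / (α + H)) := by field_simp; ring
  have hbernoulli :=
    rpow_one_add_le_one_add_mul_self (s := -(α / (α + H))) (by linarith) hα0.le hα1
  simp only [energy, hη, one_rpow]
  nlinarith [div_pos hα0 hsum]

theorem energyDeriv2_pos (hα0 : 0 ≤ α) (hα1 : α ≤ 1) {x : ℝ} (hx : 0 < x)
    (hcrit : energyDeriv α H x = 0) (hlt : energy α H x < energy α H (x / 2)) :
    0 < energyDeriv2 α H x := by
  by_contra! hconc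
  have hpos : Icc (x / 2) x ⊆ Ioi 0 := fun y hy => show 0 < y by linarith [hy.1]
  -- `φ'' ≤ 0` on `[x / 2, x]` and `φ'(x) = 0`, so `-φ` has its minimum there at `x`.
  have := (convex_Icc (x / 2) x).quadratic_growth_of_hasDerivAt2_ge (κ := 0)
    (fun y hy => (hasDerivAt_energy (H := H) (hpos hy)).neg)
    (fun y hy => (hasDerivAt_energyDeriv (hpos hy)).neg)
    (right_mem_Icc.2 (by linarith)) (by rw [hcrit, neg_zero])
    (fun y hy => neg_nonneg.2 ((monotoneOn_energyDeriv2 hα0 hα1 (hpos hy) hx hy.2).trans hconc))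
    (left_mem_Icc.2 (by linarith))
  simp only [zero_div, zero_mul, Pi.neg_apply] at this
  linarith

theorem eventually_quadratic_growth_energy {x : ℝ} (hx : 0 < x)
    (hcrit : energyDeriv α H x = 0) (hconv : 0 < energyDeriv2 α H x) :
    ∀ᶠ η in 𝓝 x, energyDeriv2 α H x / 4 * (η - x) ^ 2 ≤ energy α H η - energy α H x := by
  have hcont : ContinuousAt (energyDeriv2 α H) x :=
    continuousAt_const.sub (continuousAt_const.mul (continuousAt_rpow_const _ _ (Or.inl hx.ne')))
  obtain ⟨ε, hε, hball⟩ := Metric.eventually_nhds_iff.1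
    ((lt_mem_nhds hx).and (hcont.eventually (eventually_ge_nhds (half_lt_self hconv))))
  filter_upwards [Metric.ball_mem_nhds x hε] with η hη
  have := (convex_ball x ε).quadratic_growth_of_hasDerivAt2_ge
    (fun y hy => hasDerivAt_energy (hball hy).1) (fun y hy => hasDerivAt_energyDeriv (hball hy).1)
    (Metric.mem_ball_self hε) hcrit (fun y hy => (hball hy).2) hη
  linarith

theorem exists_eventually_quadratic_growth_energy (hα0 : 0 < α) (hα1 : α < 1) (hH : 0 < H)
    {ηc : ℝ} (hηc : ηc ∈ Icc 0 1)
    (hmin : ∀ η ∈ Icc 0 1, η ≠ ηc → energy α H ηc < energy α H η) :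
    ∃ c > 0, ∀ᶠ η in 𝓝[Icc 0 1 \ {ηc}] ηc, c * (η - ηc) ^ 2 ≤ energy α H η - energy α H ηc := by
  rcases hηc.1.eq_or_lt with rfl | hpos
  · refine ⟨H, hH, ?_⟩
    have hsub : Icc (0 : ℝ) 1 \ {0} ⊆ Ioi 0 := fun η hη => lt_of_le_of_ne hη.1.1 (Ne.symm hη.2)
    simpa only [sub_zero] using (eventually_quadratic_growth_energy_zero hα0 hα1).filter_mono
      (nhdsWithin_mono _ hsub)
  have hlt1 : ηc < 1 := by
    refine hηc.2.lt_of_ne fun h => ?_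
    subst h
    have hη : H / (α + H) < 1 := (div_lt_one (by positivity)).2 (by linarith)
    exact lt_asymm (energy_lt_energy_one hα0 hα1.le hH) (hmin _ ⟨by positivity, hη.le⟩ hη.ne)
  have hlocmin : IsLocalMin (energy α H) ηc :=
    (isMinOn_iff.2 fun η hη => (eq_or_ne η ηc).elim (fun h => h ▸ le_rfl)
      fun h => (hmin η hη h).le).isLocalMin (Icc_mem_nhds hpos hlt1)
  have hcrit : energyDeriv α H ηc = 0 := hlocmin.hasDerivAt_eq_zero (hasDerivAt_energy hpos)
  have hconv := energyDeriv2_pos hα0.le hα1.le hpos hcrit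
    (hmin _ ⟨by positivity, by linarith⟩ (by linarith))
  exact ⟨_, by positivity, nhdsWithin_le_nhds (eventually_quadratic_growth_energy hpos hcrit hconv)⟩

end Droplet

/-- Let `d ≥ 2`, `H > 0`, and `φ(η) = η^{(d−1)/d} + H(1−η)²` on `[0,1]`. If `η_c ∈ [0,1]`
is the unique global minimizer of `φ` on `[0,1]`, then there exists `M > 0` such that
`φ(η) − φ(η_c) ≥ (η − η_c)²/M` for all `η ∈ [0,1]`. -/
theorem droplet_quadratic_bound (d : ℕ) (hd : 2 ≤ d) (H : ℝ) (hH : 0 < H)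
    (φ : ℝ → ℝ) (hφ : ∀ η, φ η = η ^ (((d : ℝ) - 1) / d) + H * (1 - η) ^ 2)
    (ηc : ℝ) (hηc : ηc ∈ Set.Icc (0:ℝ) 1)
    (hmin : ∀ η ∈ Set.Icc (0:ℝ) 1, η ≠ ηc → φ ηc < φ η) :
    ∃ M : ℝ, 0 < M ∧ ∀ η ∈ Set.Icc (0:ℝ) 1, (η - ηc) ^ 2 / M ≤ φ η - φ ηc := by
  obtain rfl : φ = Droplet.energy (((d : ℝ) - 1) / d) H := funext hφ
  have hd' : (2 : ℝ) ≤ d := by exact_mod_cast hd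
  have hα0 : 0 < ((d : ℝ) - 1) / d := div_pos (by linarith) (by linarith)
  have hα1 : ((d : ℝ) - 1) / d < 1 := (div_lt_one (by linarith)).2 (by linarith)
  obtain ⟨c, hc, hloc⟩ := Droplet.exists_eventually_quadratic_growth_energy hα0 hα1 hH hηc hmin
  obtain ⟨c', hc', hglob⟩ := isCompact_Icc.exists_quadratic_growth
    (Droplet.continuous_energy hα0.le).continuousOn hmin hc
    (by simpa only [dist_eq, sq_abs] using hloc)
  refine ⟨c'⁻¹, inv_pos.2 hc', fun η hη => ?_⟩
  simpa only [div_inv_eq_mul, mul_comm, dist_eq, sq_abs] using hglob η hη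
end
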